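/- arXiv:math/0612787 — 5 statements merged into one kernel-verified Lean document; each statement's English description precedes it below -/
import Mathlib

section
/- If a ∈ W (the Wiener algebra) and Ψ is an N-function satisfying the Δ_2^0-condition, then the Hankel operator H(a) with matrix (a_{j+k+1})_{j,k≥0} is compact on the Orlicz sequence space ℓ^Ψ(ℤ_+). -/
def IsNFunction (Φ : ℝ → ℝ) : Prop :=
  ConvexOn ℝ (Set.Ici 0) Φ ∧ Φ 0 = 0 ∧ (∀ x : ℝ, 0 < x → 0 < Φ x) ∧
  Filter.Tendsto (fun x => Φ x / x) (nhdsWithin 0 (Set.Ioi 0)) (nhds 0) ∧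
  Filter.Tendsto (fun x => Φ x / x) Filter.atTop Filter.atTop

def Delta20 (Φ : ℝ → ℝ) : Prop :=
  ∃ C : ℝ, 0 < C ∧ ∀ᶠ x in nhdsWithin 0 (Set.Ioi 0), Φ (2 * x) ≤ C * Φ x

def MemOrlicz (Ψ : ℝ → ℝ) (c : ℕ → ℂ) : Prop :=
  ∃ l : ℝ, 0 < l ∧ Summable (fun k => Ψ (‖c k‖ / l)) ∧ ∑' k, Ψ (‖c k‖ / l) ≤ 1

noncomputable def luxNorm (Ψ : ℝ → ℝ) (c : ℕ → ℂ) : ℝ :=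
  sInf {l : ℝ | 0 < l ∧ Summable (fun k => Ψ (‖c k‖ / l)) ∧ ∑' k, Ψ (‖c k‖ / l) ≤ 1}

/-- The Hankel operator `H(a)` with matrix `(a_{j+k+1})_{j,k ≥ 0}`. -/
noncomputable def hank (a : ℤ → ℂ) (c : ℕ → ℂ) : ℕ → ℂ :=
  fun j => ∑' k : ℕ, a ((j : ℤ) + k + 1) * c k

section helpers
variable {Ψ : ℝ → ℝ}

lemma psi_zero (hΨ : IsNFunction Ψ) : Ψ 0 = 0 := hΨ.2.1

lemma psi_convexOn (hΨ : IsNFunction Ψ) : ConvexOn ℝ (Set.Ici 0) Ψ := hΨ.1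

lemma psi_nonneg (hΨ : IsNFunction Ψ) {x : ℝ} (hx : 0 ≤ x) : 0 ≤ Ψ x := by
  rcases eq_or_lt_of_le hx with h | h
  · simp [← h, hΨ.2.1]
  · exact (hΨ.2.2.1 x h).le

lemma psi_smul (hΨ : IsNFunction Ψ) {t x : ℝ} (ht0 : 0 ≤ t) (ht1 : t ≤ 1) (hx : 0 ≤ x) :
    Ψ (t * x) ≤ t * Ψ x := by
  have := hΨ.1.2 (Set.mem_Ici.2 hx) (Set.mem_Ici.2 le_rfl) ht0 (by linarith : (0:ℝ) ≤ 1 - t)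
    (by ring)
  simpa [hΨ.2.1, smul_eq_mul] using this

lemma psi_mono (hΨ : IsNFunction Ψ) {x y : ℝ} (hx : 0 ≤ x) (hxy : x ≤ y) : Ψ x ≤ Ψ y := by
  rcases eq_or_lt_of_le (hx.trans hxy) with h | hy
  · have : x = 0 := le_antisymm (hxy.trans h.symm.le) hx
    simp [this, ← h, hΨ.2.1]
  · have h1 : x = (x / y) * y := by field_simp
    calc Ψ x = Ψ ((x / y) * y) := by rw [← h1]
      _ ≤ (x / y) * Ψ y := psi_smul hΨ (div_nonneg hx hy.le) (by
            rw [div_le_one hy]; exact hxy) hy.le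
      _ ≤ 1 * Ψ y := by
          apply mul_le_mul_of_nonneg_right _ (psi_nonneg hΨ hy.le)
          rw [div_le_one hy]; exact hxy
      _ = Ψ y := one_mul _

lemma psi_small (hΨ : IsNFunction Ψ) {η : ℝ} (hη : 0 < η) :
    ∃ x : ℝ, 0 < x ∧ Ψ x ≤ η := by
  have h1 : ∀ᶠ x in nhdsWithin 0 (Set.Ioi 0), Ψ x / x < 1 :=
    hΨ.2.2.2.1.eventually_lt_const one_pos
  have h2 : ∀ᶠ x : ℝ in nhdsWithin 0 (Set.Ioi 0), x < η :=
    eventually_nhdsWithin_of_eventually_nhds (eventually_lt_nhds hη)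
  have h3 : ∀ᶠ x : ℝ in nhdsWithin 0 (Set.Ioi 0), x ∈ Set.Ioi (0:ℝ) :=
    eventually_mem_nhdsWithin
  obtain ⟨x, ⟨hx1, hx2⟩, hx3⟩ := ((h1.and h2).and h3).exists
  refine ⟨x, hx3, ?_⟩
  have hxpos : (0:ℝ) < x := hx3
  have := (div_lt_one hxpos).1 hx1
  linarith [hx2]

lemma psi_big (hΨ : IsNFunction Ψ) : ∃ M : ℝ, 0 < M ∧ 2 ≤ Ψ M := by
  have h1 : ∀ᶠ x : ℝ in Filter.atTop, 2 ≤ Ψ x / x := hΨ.2.2.2.2.eventually_ge_atTop 2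
  have h2 : ∀ᶠ x : ℝ in Filter.atTop, (1:ℝ) ≤ x := Filter.eventually_ge_atTop 1
  obtain ⟨x, hx1, hx2⟩ := (h1.and h2).exists
  refine ⟨x, by linarith, ?_⟩
  have hxpos : (0:ℝ) < x := by linarith
  have := (le_div_iff₀ hxpos).1 hx1
  nlinarith [psi_nonneg hΨ hxpos.le]

/-- Finite Jensen with subprobability weights. -/
lemma finset_jensen (hΨ : IsNFunction Ψ) {w x : ℕ → ℝ} (hw : ∀ k, 0 ≤ w k)
    (hx : ∀ k, 0 ≤ x k) (F : Finset ℕ) (hW1 : ∑ k ∈ F, w k ≤ 1) :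
    Ψ (∑ k ∈ F, w k * x k) ≤ ∑ k ∈ F, w k * Ψ (x k) := by
  set W := ∑ k ∈ F, w k with hW
  have hW0 : 0 ≤ W := Finset.sum_nonneg fun k _ => hw k
  rcases eq_or_lt_of_le hW0 with h0 | h0
  · have hz : ∀ k ∈ F, w k = 0 := by
      intro k hk
      exact (Finset.sum_eq_zero_iff_of_nonneg (fun i _ => hw i)).1 h0.symm k hk
    have e1 : ∑ k ∈ F, w k * x k = 0 := Finset.sum_eq_zero fun k hk => by rw [hz k hk, zero_mul]
    have e2 : ∑ k ∈ F, w k * Ψ (x k) = 0 := Finset.sum_eq_zero fun k hk => by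
      rw [hz k hk, zero_mul]
    rw [e1, e2, psi_zero hΨ]
  · have hjensen := (psi_convexOn hΨ).map_sum_le (t := F) (w := fun k => w k / W)
      (p := x) (fun k _ => div_nonneg (hw k) hW0)
      (by rw [← Finset.sum_div]; field_simp; exact hW.symm) (fun k _ => Set.mem_Ici.2 (hx k))
    have hsum : ∑ k ∈ F, w k * x k = W * ∑ k ∈ F, (w k / W) • x k := by
      rw [Finset.mul_sum]
      refine Finset.sum_congr rfl fun k _ => ?_
      rw [smul_eq_mul]; field_simp
    rw [hsum]
    calc Ψ (W * ∑ k ∈ F, (w k / W) • x k)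
        ≤ W * Ψ (∑ k ∈ F, (w k / W) • x k) := by
          refine psi_smul hΨ hW0 hW1 (Finset.sum_nonneg fun k _ => ?_)
          exact smul_nonneg (div_nonneg (hw k) hW0) (hx k)
      _ ≤ W * ∑ k ∈ F, (w k / W) • Ψ (x k) := mul_le_mul_of_nonneg_left hjensen hW0
      _ = ∑ k ∈ F, w k * Ψ (x k) := by
          rw [Finset.mul_sum]
          refine Finset.sum_congr rfl fun k _ => ?_
          rw [smul_eq_mul]; field_simp

/-- Countable Jensen with subprobability weights. -/
lemma tsum_jensen (hΨ : IsNFunction Ψ) {w x : ℕ → ℝ} (hw : ∀ k, 0 ≤ w k)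
    (hx : ∀ k, 0 ≤ x k) (hsw : Summable w) (hw1 : ∑' k, w k ≤ 1)
    (hswx : Summable fun k => w k * x k) (hs : Summable fun k => w k * Ψ (x k)) :
    Ψ (∑' k, w k * x k) ≤ ∑' k, w k * Ψ (x k) := by
  set s := ∑' k, w k * x k with hsdef
  have hterm : ∀ k, 0 ≤ w k * x k := fun k => mul_nonneg (hw k) (hx k)
  have htermΨ : ∀ k, 0 ≤ w k * Ψ (x k) := fun k => mul_nonneg (hw k) (psi_nonneg hΨ (hx k))
  have hs0 : 0 ≤ s := tsum_nonneg hterm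
  have hFle : ∀ F : Finset ℕ, ∑ k ∈ F, w k ≤ 1 :=
    fun F => le_trans (Summable.sum_le_tsum F (fun k _ => hw k) hsw) hw1
  have hA : ∀ F : Finset ℕ, Ψ (∑ k ∈ F, w k * x k) ≤ ∑' k, w k * Ψ (x k) := fun F =>
    le_trans (finset_jensen hΨ hw hx F (hFle F)) (Summable.sum_le_tsum F (fun k _ => htermΨ k) hs)
  rcases eq_or_lt_of_le hs0 with h0 | h0
  · rw [← h0, psi_zero hΨ]
    exact tsum_nonneg htermΨ
  · set φ := (Ψ (2 * s) - Ψ s) / s with hφ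
    have hφ0 : 0 ≤ φ := div_nonneg (by
      have := psi_mono hΨ hs0 (by linarith : s ≤ 2 * s); linarith) hs0
    refine le_of_forall_pos_le_add fun δ hδ => ?_
    obtain ⟨F, hF⟩ := (hswx.hasSum.eventually (Ioi_mem_nhds
      (show s - δ / (φ + 1) < s by
        have : 0 < δ / (φ + 1) := by positivity
        linarith))).exists
    have hFs : ∑ k ∈ F, w k * x k ≤ s := Summable.sum_le_tsum F (fun k _ => hterm k) hswx
    have hFlt : s - δ / (φ + 1) < ∑ k ∈ F, w k * x k := hF
    have key : Ψ s - Ψ (∑ k ∈ F, w k * x k) ≤ φ * (s - ∑ k ∈ F, w k * x k) := by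
      rcases eq_or_lt_of_le hFs with he | hlt
      · rw [he]; ring_nf; simp
      · have hslope := (psi_convexOn hΨ).slope_mono_adjacent
          (Set.mem_Ici.2 (Finset.sum_nonneg fun k _ => hterm k))
          (Set.mem_Ici.2 (by linarith : (0:ℝ) ≤ 2 * s)) hlt (by linarith)
        have h2s : 2 * s - s = s := by ring
        rw [h2s] at hslope
        have hpos : 0 < s - ∑ k ∈ F, w k * x k := by linarith
        have := (div_le_div_iff₀ hpos h0).1 (le_trans hslope (le_of_eq rfl))
        calc Ψ s - Ψ (∑ k ∈ F, w k * x k)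
            ≤ ((Ψ (2 * s) - Ψ s) / s) * (s - ∑ k ∈ F, w k * x k) := by
              rw [div_mul_eq_mul_div, le_div_iff₀ h0]
              nlinarith
          _ = φ * (s - ∑ k ∈ F, w k * x k) := rfl
    have hδ' : φ * (s - ∑ k ∈ F, w k * x k) ≤ δ := by
      have h1 : s - ∑ k ∈ F, w k * x k ≤ δ / (φ + 1) := by linarith
      have h2 : φ * (s - ∑ k ∈ F, w k * x k) ≤ φ * (δ / (φ + 1)) :=
        mul_le_mul_of_nonneg_left h1 hφ0
      have h3 : φ * (δ / (φ + 1)) ≤ δ := by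
        rw [mul_div_assoc', div_le_iff₀ (by linarith : (0:ℝ) < φ + 1)]
        nlinarith
      linarith
    linarith [hA F]

lemma modular_add (hΨ : IsNFunction Ψ) {f g : ℕ → ℂ} {l₁ l₂ : ℝ}
    (hl₁ : 0 < l₁) (hl₂ : 0 < l₂)
    (hfs : Summable fun j => Ψ (‖f j‖ / l₁)) (hf1 : ∑' j, Ψ (‖f j‖ / l₁) ≤ 1)
    (hgs : Summable fun j => Ψ (‖g j‖ / l₂)) (hg1 : ∑' j, Ψ (‖g j‖ / l₂) ≤ 1) :
    (Summable fun j => Ψ (‖f j + g j‖ / (l₁ + l₂))) ∧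
      ∑' j, Ψ (‖f j + g j‖ / (l₁ + l₂)) ≤ 1 := by
  set θ := l₁ / (l₁ + l₂) with hθ
  have hl : 0 < l₁ + l₂ := by linarith
  have hθ0 : 0 ≤ θ := by positivity
  have hθ1 : 0 ≤ 1 - θ := by
    rw [hθ, sub_nonneg, div_le_one hl]; linarith
  have hkey : ∀ j, Ψ (‖f j + g j‖ / (l₁ + l₂)) ≤
      θ * Ψ (‖f j‖ / l₁) + (1 - θ) * Ψ (‖g j‖ / l₂) := by
    intro j
    have h1 : ‖f j + g j‖ / (l₁ + l₂) ≤ θ * (‖f j‖ / l₁) + (1 - θ) * (‖g j‖ / l₂) := by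
      have hn : ‖f j + g j‖ ≤ ‖f j‖ + ‖g j‖ := norm_add_le _ _
      have e1 : θ * (‖f j‖ / l₁) = ‖f j‖ / (l₁ + l₂) := by
        rw [hθ]; field_simp
      have e2 : (1 - θ) * (‖g j‖ / l₂) = ‖g j‖ / (l₁ + l₂) := by
        have : 1 - θ = l₂ / (l₁ + l₂) := by rw [hθ]; field_simp; ring
        rw [this]; field_simp
      rw [e1, e2, ← add_div]
      gcongr
    have h2 := (psi_convexOn hΨ).2 (Set.mem_Ici.2 (by positivity : (0:ℝ) ≤ ‖f j‖ / l₁))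
      (Set.mem_Ici.2 (by positivity : (0:ℝ) ≤ ‖g j‖ / l₂)) hθ0 hθ1 (by ring)
    calc Ψ (‖f j + g j‖ / (l₁ + l₂))
        ≤ Ψ (θ * (‖f j‖ / l₁) + (1 - θ) * (‖g j‖ / l₂)) :=
          psi_mono hΨ (by positivity) h1
      _ ≤ θ * Ψ (‖f j‖ / l₁) + (1 - θ) * Ψ (‖g j‖ / l₂) := by
          simpa [smul_eq_mul] using h2
  have hmaj : Summable fun j => θ * Ψ (‖f j‖ / l₁) + (1 - θ) * Ψ (‖g j‖ / l₂) :=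
    (hfs.mul_left θ).add (hgs.mul_left (1 - θ))
  have hsum : Summable fun j => Ψ (‖f j + g j‖ / (l₁ + l₂)) :=
    Summable.of_nonneg_of_le (fun j => psi_nonneg hΨ (by positivity)) hkey hmaj
  refine ⟨hsum, ?_⟩
  calc ∑' j, Ψ (‖f j + g j‖ / (l₁ + l₂))
      ≤ ∑' j, (θ * Ψ (‖f j‖ / l₁) + (1 - θ) * Ψ (‖g j‖ / l₂)) :=
        Summable.tsum_le_tsum hkey hsum hmaj
    _ = θ * ∑' j, Ψ (‖f j‖ / l₁) + (1 - θ) * ∑' j, Ψ (‖g j‖ / l₂) := by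
        rw [Summable.tsum_add (hfs.mul_left θ) (hgs.mul_left (1 - θ)), tsum_mul_left, tsum_mul_left]
    _ ≤ θ * 1 + (1 - θ) * 1 :=
        add_le_add (mul_le_mul_of_nonneg_left hf1 hθ0) (mul_le_mul_of_nonneg_left hg1 hθ1)
    _ = 1 := by ring

end helpers

/-- Compactness of `H(a)` on `ℓ^Ψ(ℤ₊)`: since `ℓ^Ψ(ℤ₊)` is complete, relative
compactness of the image of the unit ball is equivalent to its total boundedness,
i.e. the existence of finite ε-nets. -/
theorem stmt_11 (Ψ : ℝ → ℝ) (hΨ : IsNFunction Ψ) (hΔ : Delta20 Ψ)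
    (a : ℤ → ℂ) (ha : Summable fun k => ‖a k‖) :
    ∀ ε : ℝ, 0 < ε → ∃ S : Finset (ℕ → ℂ),
      ∀ c : ℕ → ℂ, MemOrlicz Ψ c → luxNorm Ψ c ≤ 1 →
        ∃ d ∈ S, MemOrlicz Ψ (fun j => hank a c j - d j) ∧
          luxNorm Ψ (fun j => hank a c j - d j) ≤ ε := by
  classical
  intro ε hε
  obtain ⟨M, hM0, hM2⟩ := psi_big hΨ
  set B := 2 * M with hB
  have hB0 : 0 < B := by positivity
  -- tail sums of a
  set g : ℕ → ℝ := fun m => ‖a ((m : ℤ) + 1)‖ with hgdef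
  have hgsum : Summable g := by
    have : Function.Injective (fun m : ℕ => (m : ℤ) + 1) := by
      intro x y h; simp only at h; omega
    exact ha.comp_injective this
  set t : ℕ → ℝ := fun m => ∑' k : ℕ, g (k + m) with htdef
  have htsumm : ∀ m : ℕ, Summable fun k => g (k + m) := fun m => (summable_nat_add_iff m).2 hgsum
  have htnn : ∀ m, 0 ≤ t m := fun m => tsum_nonneg fun k => norm_nonneg _
  have htmono : ∀ m d : ℕ, t (m + d) ≤ t m := by
    intro m d
    refine Summable.tsum_le_tsum_of_inj (fun k => k + d) (add_left_injective d)
      (fun i _ => norm_nonneg _) (fun k => le_of_eq ?_) (htsumm (m + d)) (htsumm m)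
    show g (k + (m + d)) = g (k + d + m)
    congr 1; omega
  have htend : Filter.Tendsto t Filter.atTop (nhds 0) := tendsto_sum_nat_add g
  obtain ⟨N, hN⟩ : ∃ N : ℕ, t N ≤ ε / 8 :=
    (htend.eventually (Iic_mem_nhds (by positivity))).exists
  set W := ε / 8 with hWdef
  have hW0 : 0 < W := by positivity
  -- split a
  set A₁ : ℤ → ℂ := fun m => if (N : ℤ) < m then 0 else a m with hA₁def
  set A₂ : ℤ → ℂ := fun m => if (N : ℤ) < m then a m else 0 with hA₂def
  have hsplit : ∀ m, a m = A₁ m + A₂ m := by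
    intro m; by_cases h : (N : ℤ) < m <;> simp [hA₁def, hA₂def, h]
  have hA₁a : ∀ m, ‖A₁ m‖ ≤ ‖a m‖ := by
    intro m; by_cases h : (N : ℤ) < m <;> simp [hA₁def, h]
  have hA₂a : ∀ m, ‖A₂ m‖ ≤ ‖a m‖ := by
    intro m; by_cases h : (N : ℤ) < m <;> simp [hA₂def, h]
  -- row summability
  have hsummA : ∀ j : ℕ, Summable fun k : ℕ => ‖a ((j : ℤ) + k + 1)‖ := by
    intro j
    have hinj : Function.Injective (fun k : ℕ => (j : ℤ) + k + 1) := by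
      intro x y h; simp only at h; omega
    exact ha.comp_injective hinj
  have hkeyS : ∀ j : ℕ, Summable fun k : ℕ => ‖A₂ ((j : ℤ) + k + 1)‖ := fun j =>
    Summable.of_nonneg_of_le (fun k => norm_nonneg _) (fun k => hA₂a _) (hsummA j)
  have hkeyS1 : ∀ j : ℕ, Summable fun k : ℕ => ‖A₁ ((j : ℤ) + k + 1)‖ := fun j =>
    Summable.of_nonneg_of_le (fun k => norm_nonneg _) (fun k => hA₁a _) (hsummA j)
  -- row tail identity
  have hrow : ∀ j : ℕ, ∑' k : ℕ, ‖a ((j : ℤ) + k + 1)‖ = t j := by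
    intro j
    refine tsum_congr fun k => ?_
    show ‖a ((j : ℤ) + k + 1)‖ = ‖a (((k + j : ℕ) : ℤ) + 1)‖
    congr 2; push_cast; ring
  have htle0 : ∀ j : ℕ, t j ≤ t 0 := by
    intro j
    have := htmono 0 j
    simpa using this
  -- key tail bound for A₂ rows
  have hkeyB : ∀ j : ℕ, ∑' k : ℕ, ‖A₂ ((j : ℤ) + k + 1)‖ ≤ t N := by
    intro j
    set m₀ := N - j with hm₀
    have hzero : ∀ i ∈ Finset.range m₀, ‖A₂ ((j : ℤ) + i + 1)‖ = 0 := by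
      intro i hi
      rw [Finset.mem_range] at hi
      have hle : ¬ ((N : ℤ) < (j : ℤ) + i + 1) := by omega
      simp [hA₂def, hle]
    have hsp := Summable.sum_add_tsum_nat_add m₀ (hkeyS j)
    rw [Finset.sum_eq_zero hzero, zero_add] at hsp
    rw [← hsp]
    have hJ : ∀ k : ℕ, ‖A₂ ((j : ℤ) + ((k + m₀ : ℕ) : ℤ) + 1)‖ = g (k + (j + m₀)) := by
      intro k
      have hgt : (N : ℤ) < (j : ℤ) + ((k + m₀ : ℕ) : ℤ) + 1 := by push_cast; omega
      rw [hA₂def]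
      simp only [if_pos hgt]
      show ‖a ((j : ℤ) + ((k + m₀ : ℕ) : ℤ) + 1)‖ = ‖a (((k + (j + m₀) : ℕ) : ℤ) + 1)‖
      congr 2; push_cast; ring
    calc ∑' k : ℕ, ‖A₂ ((j : ℤ) + ((k + m₀ : ℕ) : ℤ) + 1)‖
        = ∑' k : ℕ, g (k + (j + m₀)) := tsum_congr hJ
      _ = t (j + m₀) := rfl
      _ ≤ t N := by
          have hjm : j + m₀ = N + (j + m₀ - N) := by omega
          rw [hjm]; exact htmono N _
  -- column version
  have hcolS : ∀ k : ℕ, Summable fun j : ℕ => ‖A₂ ((j : ℤ) + k + 1)‖ := by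
    intro k
    have : (fun j : ℕ => ‖A₂ ((j : ℤ) + k + 1)‖) = fun j : ℕ => ‖A₂ ((k : ℤ) + j + 1)‖ := by
      funext j; congr 2; ring
    rw [this]; exact hkeyS k
  have hcolB : ∀ k : ℕ, ∑' j : ℕ, ‖A₂ ((j : ℤ) + k + 1)‖ ≤ t N := by
    intro k
    have : (fun j : ℕ => ‖A₂ ((j : ℤ) + k + 1)‖) = fun j : ℕ => ‖A₂ ((k : ℤ) + j + 1)‖ := by
      funext j; congr 2; ring
    rw [this]; exact hkeyB k
  -- the finite net
  set ρ := B * t 0 + 1 with hρdef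
  obtain ⟨x₁, hx₁0, hx₁⟩ := psi_small hΨ (show (0:ℝ) < 1 / (N + 1) by positivity)
  set δ := x₁ * (ε / 2) with hδdef
  have hδ0 : 0 < δ := by positivity
  obtain ⟨tset, htfin, htsub⟩ := Metric.totallyBounded_iff.1
    (isCompact_closedBall (0 : ℂ) ρ).totallyBounded δ hδ0
  set G : Finset ℂ := htfin.toFinset with hGdef
  refine ⟨(Fintype.piFinset fun _ : Fin N => G).image
    (fun v => fun j : ℕ => if h : j < N then v ⟨j, h⟩ else 0), ?_⟩
  intro c hc hc1
  -- modular of c at level 2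
  obtain ⟨l', ⟨hl'0, hl's, hl'1⟩, hl'2⟩ :=
    exists_lt_of_csInf_lt (s := {l : ℝ | 0 < l ∧ (Summable fun k => Ψ (‖c k‖ / l)) ∧
      ∑' k, Ψ (‖c k‖ / l) ≤ 1}) (by
        obtain ⟨l, hl⟩ := hc; exact ⟨l, hl⟩) (lt_of_le_of_lt hc1 one_lt_two)
  set φc : ℕ → ℝ := fun k => Ψ (‖c k‖ / 2) with hφcdef
  have hptw : ∀ k, φc k ≤ Ψ (‖c k‖ / l') := by
    intro k
    refine psi_mono hΨ (by positivity) ?_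
    have h2 : ‖c k‖ / 2 ≤ ‖c k‖ / l' := by
      gcongr
    exact h2
  have hφs : Summable φc :=
    Summable.of_nonneg_of_le (fun k => psi_nonneg hΨ (by positivity)) hptw hl's
  have hφ1 : ∑' k, φc k ≤ 1 := (Summable.tsum_le_tsum hptw hφs hl's).trans hl'1
  have hφle1 : ∀ k, φc k ≤ 1 := fun k =>
    (Summable.le_tsum hφs k fun i _ => psi_nonneg hΨ (by positivity)).trans hφ1
  have hφnn : ∀ k, 0 ≤ φc k := fun k => psi_nonneg hΨ (by positivity)
  -- entry bound
  have hcB : ∀ k, ‖c k‖ ≤ B := by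
    intro k
    by_contra hcon
    push_neg at hcon
    have h1 : M ≤ ‖c k‖ / 2 := by rw [hB] at hcon; linarith
    have h2 : Ψ M ≤ φc k := psi_mono hΨ hM0.le h1
    linarith [hφle1 k]
  -- summability of Hankel rows
  have hsum0 : ∀ j : ℕ, Summable fun k : ℕ => a ((j : ℤ) + k + 1) * c k := by
    intro j
    refine Summable.of_norm_bounded (g := fun k : ℕ => ‖a ((j : ℤ) + k + 1)‖ * B)
      ((hsummA j).mul_right B) fun k => ?_
    rw [norm_mul]
    exact mul_le_mul_of_nonneg_left (hcB k) (norm_nonneg _)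
  have hsum1 : ∀ j : ℕ, Summable fun k : ℕ => A₁ ((j : ℤ) + k + 1) * c k := by
    intro j
    refine Summable.of_norm_bounded (g := fun k : ℕ => ‖a ((j : ℤ) + k + 1)‖ * B)
      ((hsummA j).mul_right B) fun k => ?_
    rw [norm_mul]
    exact mul_le_mul (hA₁a _) (hcB k) (norm_nonneg _) (norm_nonneg _)
  have hsum2 : ∀ j : ℕ, Summable fun k : ℕ => A₂ ((j : ℤ) + k + 1) * c k := by
    intro j
    refine Summable.of_norm_bounded (g := fun k : ℕ => ‖a ((j : ℤ) + k + 1)‖ * B)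
      ((hsummA j).mul_right B) fun k => ?_
    rw [norm_mul]
    exact mul_le_mul (hA₂a _) (hcB k) (norm_nonneg _) (norm_nonneg _)
  set F1 : ℕ → ℂ := fun j => ∑' k : ℕ, A₁ ((j : ℤ) + k + 1) * c k with hF1def
  set F2 : ℕ → ℂ := fun j => ∑' k : ℕ, A₂ ((j : ℤ) + k + 1) * c k with hF2def
  have hdecomp : ∀ j, hank a c j = F1 j + F2 j := by
    intro j
    show (∑' k : ℕ, a ((j : ℤ) + k + 1) * c k) = _
    rw [hF1def, hF2def]
    rw [← Summable.tsum_add (hsum1 j) (hsum2 j)]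
    refine tsum_congr fun k => ?_
    rw [← add_mul, ← hsplit]
  -- F1 vanishes for j ≥ N
  have hF1zero : ∀ j, N ≤ j → F1 j = 0 := by
    intro j hj
    rw [hF1def]
    have : ∀ k : ℕ, A₁ ((j : ℤ) + k + 1) * c k = 0 := by
      intro k
      have hgt : (N : ℤ) < (j : ℤ) + k + 1 := by omega
      simp [hA₁def, hgt]
    simp only [this, tsum_zero]
  -- F1 norm bound
  have hF1bd : ∀ j, ‖F1 j‖ ≤ B * t 0 := by
    intro j
    have h1 : Summable fun k : ℕ => ‖A₁ ((j : ℤ) + k + 1) * c k‖ := by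
      simpa only [norm_mul] using
        Summable.of_nonneg_of_le (fun k => by positivity)
          (fun k => mul_le_mul (hA₁a _) (hcB k) (norm_nonneg _) (norm_nonneg _))
          ((hsummA j).mul_right B)
    calc ‖F1 j‖ ≤ ∑' k : ℕ, ‖A₁ ((j : ℤ) + k + 1) * c k‖ := norm_tsum_le_tsum_norm h1
      _ ≤ ∑' k : ℕ, ‖a ((j : ℤ) + k + 1)‖ * B := by
          refine Summable.tsum_le_tsum (fun k => ?_) h1 ((hsummA j).mul_right B)
          rw [norm_mul]
          exact mul_le_mul (hA₁a _) (hcB k) (norm_nonneg _) (norm_nonneg _)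
      _ = (∑' k : ℕ, ‖a ((j : ℤ) + k + 1)‖) * B := tsum_mul_right
      _ = t j * B := by rw [hrow j]
      _ ≤ t 0 * B := mul_le_mul_of_nonneg_right (htle0 j) hB0.le
      _ = B * t 0 := mul_comm _ _
  -- choose the net point
  have hnet : ∀ i : Fin N, ∃ z ∈ tset, dist (F1 i) z < δ := by
    intro i
    have hmem : F1 (i : ℕ) ∈ Metric.closedBall (0 : ℂ) ρ := by
      rw [Metric.mem_closedBall, dist_zero_right]
      calc ‖F1 (i : ℕ)‖ ≤ B * t 0 := hF1bd _
        _ ≤ ρ := by rw [hρdef]; linarith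
    have := htsub hmem
    simp only [Set.mem_iUnion, Metric.mem_ball] at this
    obtain ⟨z, hz1, hz2⟩ := this
    exact ⟨z, hz1, hz2⟩
  choose y hy1 hy2 using hnet
  set d : ℕ → ℂ := fun j => if h : j < N then y ⟨j, h⟩ else 0 with hddef
  refine ⟨d, ?_, ?_⟩
  · refine Finset.mem_image.2 ⟨fun i => y i, ?_, rfl⟩
    exact Fintype.mem_piFinset.2 fun i => (Set.Finite.mem_toFinset htfin).2 (hy1 i)
  -- the two modular estimates
  set f : ℕ → ℂ := fun j => F1 j - d j with hfdef
  have hfsmall : ∀ j, j < N → ‖f j‖ ≤ δ := by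
    intro j hj
    rw [hfdef]
    simp only [hddef, dif_pos hj]
    rw [← dist_eq_norm]
    exact (hy2 ⟨j, hj⟩).le
  have hfzero : ∀ j, N ≤ j → f j = 0 := by
    intro j hj
    rw [hfdef]
    simp only [hddef, dif_neg (by omega : ¬ j < N)]
    rw [hF1zero j hj, sub_zero]
  have hε2 : (0:ℝ) < ε / 2 := by positivity
  -- modular of f at ε/2
  have hfS : Summable fun j => Ψ (‖f j‖ / (ε / 2)) := by
    refine summable_of_ne_finset_zero (s := Finset.range N) fun j hj => ?_
    rw [Finset.mem_range] at hj
    push_neg at hj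
    rw [hfzero j hj]
    simp [psi_zero hΨ]
  have hf1 : ∑' j, Ψ (‖f j‖ / (ε / 2)) ≤ 1 := by
    rw [tsum_eq_sum (s := Finset.range N) (fun j hj => by
      rw [Finset.mem_range] at hj
      push_neg at hj
      rw [hfzero j hj]
      simp [psi_zero hΨ])]
    have hub : ∀ j ∈ Finset.range N, Ψ (‖f j‖ / (ε / 2)) ≤ 1 / (N + 1) := by
      intro j hj
      rw [Finset.mem_range] at hj
      refine le_trans (psi_mono hΨ (by positivity) ?_) hx₁
      rw [div_le_iff₀ hε2]
      rw [hδdef] at hfsmall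
      exact hfsmall j hj
    calc ∑ j ∈ Finset.range N, Ψ (‖f j‖ / (ε / 2))
        ≤ ∑ j ∈ Finset.range N, 1 / ((N : ℝ) + 1) := Finset.sum_le_sum hub
      _ = N * (1 / ((N : ℝ) + 1)) := by rw [Finset.sum_const, Finset.card_range]; ring
      _ ≤ 1 := by
          rw [mul_one_div, div_le_one (by positivity)]
          linarith
  -- modular of F2 at ε/2 via Jensen
  set w : ℕ → ℕ → ℝ := fun j k => W⁻¹ * ‖A₂ ((j : ℤ) + k + 1)‖ with hwdef
  have hwnn : ∀ j k, 0 ≤ w j k := fun j k => by positivity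
  have hwS : ∀ j, Summable (w j) := fun j => (hkeyS j).mul_left _
  have hw1 : ∀ j, ∑' k, w j k ≤ 1 := by
    intro j
    rw [hwdef]
    simp only
    rw [tsum_mul_left]
    rw [inv_mul_le_iff₀ hW0, mul_one]
    exact (hkeyB j).trans hN
  have hwcolS : ∀ k, Summable fun j => w j k := fun k => (hcolS k).mul_left _
  have hwcol1 : ∀ k, ∑' j, w j k ≤ 1 := by
    intro k
    rw [hwdef]
    simp only
    rw [tsum_mul_left, inv_mul_le_iff₀ hW0, mul_one]
    exact (hcolB k).trans hN
  set x : ℕ → ℝ := fun k => ‖c k‖ / 4 with hxdef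
  have hxnn : ∀ k, 0 ≤ x k := fun k => by positivity
  have hwxS : ∀ j, Summable fun k => w j k * x k := by
    intro j
    refine Summable.of_nonneg_of_le (fun k => mul_nonneg (hwnn j k) (hxnn k))
      (fun k => ?_) ((hwS j).mul_right (B / 4))
    refine mul_le_mul_of_nonneg_left ?_ (hwnn j k)
    rw [hxdef]
    simp only
    gcongr
    exact hcB k
  have hΨx_le : ∀ k, Ψ (x k) ≤ φc k := by
    intro k
    refine psi_mono hΨ (by positivity) ?_
    show ‖c k‖ / 4 ≤ ‖c k‖ / 2
    gcongr
    norm_num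
  have hwΨS : ∀ j, Summable fun k => w j k * Ψ (x k) := by
    intro j
    refine Summable.of_nonneg_of_le
      (fun k => mul_nonneg (hwnn j k) (psi_nonneg hΨ (hxnn k))) (fun k => ?_) (hwS j)
    calc w j k * Ψ (x k) ≤ w j k * 1 := by
          refine mul_le_mul_of_nonneg_left ((hΨx_le k).trans (hφle1 k)) (hwnn j k)
      _ = w j k := mul_one _
  have hwφS : ∀ j, Summable fun k => w j k * φc k := by
    intro j
    refine Summable.of_nonneg_of_le (fun k => mul_nonneg (hwnn j k) (hφnn k))
      (fun k => ?_) (hwS j)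
    calc w j k * φc k ≤ w j k * 1 := mul_le_mul_of_nonneg_left (hφle1 k) (hwnn j k)
      _ = w j k := mul_one _
  -- row bound for F2
  have hF2row : ∀ j, ‖F2 j‖ / (ε / 2) ≤ ∑' k, w j k * x k := by
    intro j
    have h1 : Summable fun k : ℕ => ‖A₂ ((j : ℤ) + k + 1) * c k‖ := by
      simpa only [norm_mul] using
        Summable.of_nonneg_of_le (fun k => by positivity)
          (fun k => mul_le_mul (hA₂a _) (hcB k) (norm_nonneg _) (norm_nonneg _))
          ((hsummA j).mul_right B)
    have h2 : ‖F2 j‖ ≤ ∑' k : ℕ, ‖A₂ ((j : ℤ) + k + 1)‖ * ‖c k‖ := by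
      calc ‖F2 j‖ ≤ ∑' k : ℕ, ‖A₂ ((j : ℤ) + k + 1) * c k‖ := norm_tsum_le_tsum_norm h1
        _ = ∑' k : ℕ, ‖A₂ ((j : ℤ) + k + 1)‖ * ‖c k‖ := tsum_congr fun k => norm_mul _ _
    have h3 : ∀ k : ℕ, ‖A₂ ((j : ℤ) + k + 1)‖ * ‖c k‖ = (ε / 2) * (w j k * x k) := by
      intro k
      rw [hwdef, hxdef]
      simp only
      rw [hWdef]
      field_simp
      ring
    rw [div_le_iff₀ hε2]
    calc ‖F2 j‖ ≤ ∑' k : ℕ, ‖A₂ ((j : ℤ) + k + 1)‖ * ‖c k‖ := h2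
      _ = ∑' k : ℕ, (ε / 2) * (w j k * x k) := tsum_congr h3
      _ = (ε / 2) * ∑' k, w j k * x k := tsum_mul_left
      _ = (∑' k, w j k * x k) * (ε / 2) := mul_comm _ _
  -- per-row Jensen
  have hPrw : ∀ j, Ψ (‖F2 j‖ / (ε / 2)) ≤ ∑' k, w j k * φc k := by
    intro j
    calc Ψ (‖F2 j‖ / (ε / 2))
        ≤ Ψ (∑' k, w j k * x k) := psi_mono hΨ (by positivity) (hF2row j)
      _ ≤ ∑' k, w j k * Ψ (x k) :=
          tsum_jensen hΨ (hwnn j) hxnn (hwS j) (hw1 j) (hwxS j) (hwΨS j)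
      _ ≤ ∑' k, w j k * φc k := by
          refine Summable.tsum_le_tsum (fun k => ?_) (hwΨS j) (hwφS j)
          exact mul_le_mul_of_nonneg_left (hΨx_le k) (hwnn j k)
  -- double sum
  have huS' : Summable fun p : ℕ × ℕ => w p.2 p.1 * φc p.1 := by
    refine (summable_prod_of_nonneg ?_).2 ⟨?_, ?_⟩
    · intro p; exact mul_nonneg (hwnn p.2 p.1) (hφnn p.1)
    · intro k; exact (hwcolS k).mul_right (φc k)
    · refine Summable.of_nonneg_of_le (fun k => tsum_nonneg fun j =>
        mul_nonneg (hwnn j k) (hφnn k)) (fun k => ?_) hφs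
      calc ∑' j, w j k * φc k = (∑' j, w j k) * φc k := tsum_mul_right
        _ ≤ 1 * φc k := mul_le_mul_of_nonneg_right (hwcol1 k) (hφnn k)
        _ = φc k := one_mul _
  have huS : Summable fun p : ℕ × ℕ => w p.1 p.2 * φc p.2 := by
    have := huS'.prod_symm
    simpa using this
  have hrowS : Summable fun j => ∑' k, w j k * φc k := by
    have := huS.prod
    simpa using this
  have hF2S : Summable fun j => Ψ (‖F2 j‖ / (ε / 2)) :=
    Summable.of_nonneg_of_le (fun j => psi_nonneg hΨ (by positivity)) hPrw hrowS
  have hF21 : ∑' j, Ψ (‖F2 j‖ / (ε / 2)) ≤ 1 := by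
    have hcomm : ∑' (k : ℕ) (j : ℕ), w j k * φc k = ∑' (j : ℕ) (k : ℕ), w j k * φc k :=
      Summable.tsum_comm (f := fun j k => w j k * φc k) huS
    calc ∑' j, Ψ (‖F2 j‖ / (ε / 2))
        ≤ ∑' j, ∑' k, w j k * φc k := Summable.tsum_le_tsum hPrw hF2S hrowS
      _ = ∑' k, ∑' j, w j k * φc k := hcomm.symm
      _ ≤ ∑' k, φc k := by
          refine Summable.tsum_le_tsum (fun k => ?_) (by
            have := huS'.prod
            simpa using this) hφs
          calc ∑' j, w j k * φc k = (∑' j, w j k) * φc k := tsum_mul_right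
            _ ≤ 1 * φc k := mul_le_mul_of_nonneg_right (hwcol1 k) (hφnn k)
            _ = φc k := one_mul _
      _ ≤ 1 := hφ1
  -- combine
  obtain ⟨hfin, hfin1⟩ := modular_add hΨ hε2 hε2 hfS hf1 hF2S hF21
  have heq : (fun j => hank a c j - d j) = fun j => f j + F2 j := by
    funext j
    rw [hdecomp j, hfdef]
    ring
  have hεε : ε / 2 + ε / 2 = ε := by ring
  rw [hεε] at hfin hfin1
  rw [heq]
  constructor
  · exact ⟨ε, hε, hfin, hfin1⟩
  · refine csInf_le ⟨0, fun l hl => hl.1.le⟩ ?_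
    exact ⟨hε, hfin, hfin1⟩
end

section
/- Let κ ∈ ℕ and n ≥ κ. Let a ∈ L^1(𝕋) have Fourier coefficients {a_k} and suppose the (n+1)×(n+1) Toeplitz matrix T_n(a) = (a_{j−k})_{j,k=0}^n is invertible. Then the determinant of the κ×κ lower-left corner block of T_n^{-1}(a) (rows n−κ+1,…,n and columns 0,…,κ−1) equals (−1)^{nκ} D_{n−κ}[a(t)t^{−κ}]/D_n(a), where D_m[a(t)t^{−κ}] = det (a_{j−k+κ})_{j,k=0}^m. -/
/-!
Jacobi's complementary minor identity: if `P * Q = 1` in block form, then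
`P * fromBlocks Q₁₁ 0 Q₂₁ 1 = fromBlocks 1 P₁₂ 0 P₂₂`, so `det P * det Q₁₁ = det P₂₂`.
Rotating the column indices of `T` by `n - κ + 1` (a permutation of sign `(-1) ^ (κ (n - κ + 1))`)
turns the lower-left `κ × κ` corner of `T⁻¹` into such a block `Q₁₁`, and the complementary
block `P₂₂` is the Toeplitz matrix `(a_{j - k + κ})` of `a(t) t^{-κ}`.
-/

open Matrix Equiv

theorem coe_finRotate_pow_apply {N : ℕ} (k : ℕ) (i : Fin N) :
    ((finRotate N ^ k) i : ℕ) = (i + k) % N := by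
  induction k with
  | zero => simp [Nat.mod_eq_of_lt i.isLt]
  | succ k ih =>
    have := i.neZero
    rw [pow_succ', Perm.mul_apply, finRotate_apply, Fin.val_add, Fin.val_one', ih,
      ← Nat.add_mod, add_assoc]

theorem sign_finRotate_pow (κ p : ℕ) :
    Perm.sign (finRotate (κ + p) ^ p) = (-1) ^ (κ * p) := by
  rw [map_pow, sign_finRotate, ← pow_mul]
  rcases p with _ | q
  · simp
  · rw [show (κ + (q + 1) - 1) * (q + 1) = κ * (q + 1) + q * (q + 1) by
      rw [Nat.add_sub_assoc (by omega), Nat.add_sub_cancel]; ring,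
      pow_add, (Nat.even_mul_succ_self q).neg_one_pow, mul_one]

namespace Matrix

variable {R : Type*} [CommRing R]

theorem det_mul_det_toBlocks₁₁_of_mul_eq_one {m n : Type*} [Fintype m] [Fintype n]
    [DecidableEq m] [DecidableEq n] {P Q : Matrix (m ⊕ n) (m ⊕ n) R} (h : P * Q = 1) :
    P.det * Q.toBlocks₁₁.det = P.toBlocks₂₂.det := by
  rw [← fromBlocks_toBlocks P, ← fromBlocks_toBlocks Q, fromBlocks_multiply,
    ← fromBlocks_one, fromBlocks_inj] at h
  obtain ⟨h₁₁, -, h₂₁, -⟩ := h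
  have key : P * fromBlocks Q.toBlocks₁₁ 0 Q.toBlocks₂₁ 1
      = fromBlocks 1 P.toBlocks₁₂ 0 P.toBlocks₂₂ := by
    conv_lhs => rw [← fromBlocks_toBlocks P]
    rw [fromBlocks_multiply, h₁₁, h₂₁]
    simp
  simpa [det_fromBlocks_zero₁₂, det_fromBlocks_zero₂₁] using congrArg det key

theorem det_mul_det_lowerLeft_of_mul_eq_one {N κ p : ℕ} (hN : κ + p = N)
    {A B : Matrix (Fin N) (Fin N) R} (h : A * B = 1) :
    A.det * det (of fun i j : Fin κ => B ⟨p + i, by omega⟩ ⟨j, by omega⟩) =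
      (-1) ^ (κ * p) * det (of fun i j : Fin p => A ⟨κ + i, by omega⟩ ⟨j, by omega⟩) := by
  subst hN
  set γ : Fin κ ⊕ Fin p ≃ Fin (κ + p) := finSumFinEquiv
  -- `ρ (inl i) = p + i` and `ρ (inr j) = j`
  set ρ := γ.trans (finRotate (κ + p) ^ p)
  have hPQ : A.submatrix γ ρ * B.submatrix ρ γ = 1 := by
    rw [submatrix_mul_equiv, h, submatrix_one_equiv]
  have hdet : (A.submatrix γ ρ).det = (-1) ^ (κ * p) * A.det := by
    rw [show A.submatrix γ ρ = (A.submatrix id (finRotate (κ + p) ^ p)).submatrix γ γ from rfl,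
      det_submatrix_equiv_self, det_permute', sign_finRotate_pow]
    simp
  have hB : (B.submatrix ρ γ).toBlocks₁₁ =
      of fun i j : Fin κ => B ⟨p + i, by omega⟩ ⟨j, by omega⟩ := by
    ext i j
    simp only [toBlocks₁₁, submatrix_apply, of_apply]
    congr 1
    ext
    simp only [ρ, γ, trans_apply, finSumFinEquiv_apply_left, coe_finRotate_pow_apply,
      Fin.val_castAdd]
    exact (Nat.mod_eq_of_lt (by omega)).trans (add_comm _ _)
  have hA : (A.submatrix γ ρ).toBlocks₂₂ =
      of fun i j : Fin p => A ⟨κ + i, by omega⟩ ⟨j, by omega⟩ := by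
    ext i j
    simp only [toBlocks₂₂, submatrix_apply, of_apply]
    congr 1
    ext
    simp only [ρ, γ, trans_apply, finSumFinEquiv_apply_right, coe_finRotate_pow_apply,
      Fin.val_natAdd]
    rw [add_right_comm, Nat.add_mod_left, Nat.mod_eq_of_lt (by omega)]
  have hJacobi := det_mul_det_toBlocks₁₁_of_mul_eq_one hPQ
  rw [hdet, hA, hB] at hJacobi
  rw [← hJacobi, ← mul_assoc, ← mul_assoc, ← pow_add, Even.neg_one_pow ⟨_, rfl⟩, one_mul]

end Matrix

theorem stmt_13 (a : ℤ → ℂ) (n κ : ℕ) (hn : κ ≤ n)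
    (T : Matrix (Fin (n + 1)) (Fin (n + 1)) ℂ)
    (hT : ∀ j k, T j k = a ((j.1 : ℤ) - (k.1 : ℤ)))
    (hinv : IsUnit T) :
    Matrix.det (Matrix.of fun i j : Fin κ =>
        T⁻¹ ⟨n - κ + 1 + i.1, by have hi := i.isLt; omega⟩
            ⟨j.1, by have hj := j.isLt; omega⟩) =
      (-1 : ℂ) ^ (n * κ) *
        (Matrix.det (Matrix.of fun j k : Fin (n - κ + 1) =>
          a ((j.1 : ℤ) - (k.1 : ℤ) + (κ : ℤ))) / T.det) := by
  have hdet : IsUnit T.det := (isUnit_iff_isUnit_det T).mp hinv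
  have hJacobi := det_mul_det_lowerLeft_of_mul_eq_one (show κ + (n - κ + 1) = n + 1 by omega)
    (mul_nonsing_inv T hdet)
  have hToeplitz : (of fun i j : Fin (n - κ + 1) => T ⟨κ + i, by omega⟩ ⟨j, by omega⟩) =
      of fun j k : Fin (n - κ + 1) => a ((j.1 : ℤ) - (k.1 : ℤ) + (κ : ℤ)) := by
    ext j k
    simp only [of_apply, hT]
    push_cast
    congr 1
    ring
  have hsign : (-1 : ℂ) ^ (κ * (n - κ + 1)) = (-1) ^ (n * κ) := by
    obtain ⟨m, rfl⟩ := Nat.exists_eq_add_of_le hn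
    rcases κ with _ | k
    · simp
    · rw [show k + 1 + m - (k + 1) + 1 = m + 1 by omega,
        show (k + 1 + m) * (k + 1) = (k + 1) * (m + 1) + k * (k + 1) by ring,
        pow_add, (Nat.even_mul_succ_self k).neg_one_pow, mul_one]
  rw [hToeplitz, hsign] at hJacobi
  rw [← mul_div_assoc, eq_div_iff hdet.ne_zero, mul_comm, hJacobi]
end

section
/- Let Ψ be an N-function, a ∈ W with Fourier coefficients {a_k}, and ψ = {ψ_k}_{k=0}^∞ a nondecreasing positive weight sequence with Σ_{k≥0} Ψ(|a_k|ψ_k) < ∞. Then for every n ∈ ℕ and j ∈ {0,…,n}, the operator Q_n T(a) Δ_j on ℓ^Ψ(ℤ_+) satisfies ‖Q_n T(a) Δ_j‖ ≤ (Ψ^{-1}(1)/ψ_{n−j+1}) · ‖{(a − a^{(n−j)})_k}_{k≥0}‖_{ℓ^Ψ_ψ(ℤ_+)}, where Q_n = I − P_n, Δ_j = P_j − P_{j−1} (Δ_0 = P_0), and a^{(m)}(t) = Σ_{|k|≤m} a_k t^k. -/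
/-- Membership in the weighted Orlicz sequence space `ℓ^Ψ_ψ(ℤ₊)`. -/
def MemOrliczW (Ψ : ℝ → ℝ) (ψ : ℕ → ℝ) (c : ℕ → ℂ) : Prop :=
  ∃ l : ℝ, 0 < l ∧ Summable (fun k => Ψ (‖c k‖ * ψ k / l)) ∧ ∑' k, Ψ (‖c k‖ * ψ k / l) ≤ 1

/-- The weighted Luxemburg norm on `ℓ^Ψ_ψ(ℤ₊)`. -/
noncomputable def luxNormW (Ψ : ℝ → ℝ) (ψ : ℕ → ℝ) (c : ℕ → ℂ) : ℝ :=
  sInf {l : ℝ | 0 < l ∧ Summable (fun k => Ψ (‖c k‖ * ψ k / l)) ∧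
    ∑' k, Ψ (‖c k‖ * ψ k / l) ≤ 1}

/-- `Ψ⁻¹(1)`, the generalized inverse of the N-function `Ψ` at 1. -/
noncomputable def invAtOne (Ψ : ℝ → ℝ) : ℝ := sSup {x : ℝ | 0 ≤ x ∧ Ψ x ≤ 1}

/-- `Q_n T(a) Δ_j` applied to `c`: it equals `a_{k-j} c_j` in coordinate `k` for `k > n`,
and `0` otherwise. -/
noncomputable def QTDelta (a : ℤ → ℂ) (n j : ℕ) (c : ℕ → ℂ) : ℕ → ℂ :=
  fun k => if n < k then a ((k : ℤ) - (j : ℤ)) * c j else 0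


/-!
`Q_n T(a) Δ_j c` is `c_j` times the tail `(a_k)_{k > n-j}` shifted right by `j`. The shift does not
change the Luxemburg norm; a single term of the modular of `c` is at most `1`, whence
`|c_j| ≤ Ψ⁻¹(1) ‖c‖`; and on the support `k > n - j` of the tail the weight satisfies
`ψ_k ≥ ψ_{n-j+1}`. All three estimates are proved for the admissible `λ`'s, whose infimum is the
Luxemburg norm, and only passed to infima at the end.
-/

open Function

def luxSet (Ψ : ℝ → ℝ) (ψ : ℕ → ℝ) (c : ℕ → ℂ) : Set ℝ :=
  {l : ℝ | 0 < l ∧ Summable (fun k => Ψ (‖c k‖ * ψ k / l)) ∧ ∑' k, Ψ (‖c k‖ * ψ k / l) ≤ 1}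

/-- The coefficients `(a - a^{(m)})_k`, `k ≥ 0`. -/
def tailCoeff (a : ℤ → ℂ) (m : ℕ) : ℕ → ℂ := fun k => if k ≤ m then 0 else a k

lemma le_mul_csInf {x C : ℝ} {A : Set ℝ} (hC : 0 ≤ C) (hA : A.Nonempty)
    (h : ∀ l ∈ A, x ≤ C * l) : x ≤ C * sInf A := by
  rw [← smul_eq_mul, ← Real.sInf_smul_of_nonneg hC]
  exact le_csInf (hA.smul_set) (by rintro _ ⟨l, hl, rfl⟩; exact h l hl)

lemma csInf_le_mul_csInf_mul_csInf {A B D : Set ℝ} {C : ℝ} (hC : 0 ≤ C)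
    (hA : A.Nonempty) (hB : B.Nonempty) (hA0 : ∀ x ∈ A, 0 ≤ x) (hB0 : ∀ y ∈ B, 0 ≤ y)
    (hD : BddBelow D) (h : ∀ x ∈ A, ∀ y ∈ B, C * x * y ∈ D) :
    sInf D ≤ C * sInf A * sInf B := by
  refine le_mul_csInf (mul_nonneg hC (Real.sInf_nonneg hA0)) hB fun y hy => ?_
  rw [mul_right_comm]
  refine le_mul_csInf (mul_nonneg hC (hB0 y hy)) hA fun x hx => ?_
  rw [mul_right_comm]
  exact csInf_le hD (h x hx y hy)

namespace IsNFunction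

variable {Ψ : ℝ → ℝ}

lemma nonneg (hΨ : IsNFunction Ψ) {x : ℝ} (hx : 0 ≤ x) : 0 ≤ Ψ x := by
  obtain rfl | hx := hx.eq_or_lt
  · exact hΨ.2.1.ge
  · exact (hΨ.2.2.1 x hx).le

lemma apply_mul_le (hΨ : IsNFunction Ψ) {t x : ℝ} (ht0 : 0 ≤ t) (ht1 : t ≤ 1) (hx : 0 ≤ x) :
    Ψ (t * x) ≤ t * Ψ x := by
  simpa [hΨ.2.1] using
    hΨ.1.2 Set.self_mem_Ici hx (sub_nonneg.2 ht1) ht0 (sub_add_cancel 1 t)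

lemma monotoneOn (hΨ : IsNFunction Ψ) : MonotoneOn Ψ (Set.Ici 0) := by
  intro x hx y hy hxy
  obtain rfl | hy := (Set.mem_Ici.1 hy).eq_or_lt
  · rw [le_antisymm hxy hx]
  · have hxy' : x / y ≤ 1 := (div_le_one hy).2 hxy
    calc Ψ x = Ψ (x / y * y) := by rw [div_mul_cancel₀ x hy.ne']
      _ ≤ x / y * Ψ y := hΨ.apply_mul_le (div_nonneg hx hy.le) hxy' hy.le
      _ ≤ Ψ y := mul_le_of_le_one_left (hΨ.nonneg hy.le) hxy'

lemma bddAbove_sublevel_one (hΨ : IsNFunction Ψ) : BddAbove {x : ℝ | 0 ≤ x ∧ Ψ x ≤ 1} := by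
  obtain ⟨x₀, hx₀⟩ := Filter.eventually_atTop.1 (hΨ.2.2.2.2.eventually_gt_atTop 1)
  refine ⟨max x₀ 1, fun x ⟨_, hx⟩ => ?_⟩
  by_contra! hlt
  have hx1 : 1 < x := (le_max_right _ _).trans_lt hlt
  have hΨx := hx₀ x ((le_max_left _ _).trans hlt.le)
  rw [lt_div_iff₀ (by linarith)] at hΨx
  linarith

lemma le_invAtOne (hΨ : IsNFunction Ψ) {x : ℝ} (hx : 0 ≤ x) (h : Ψ x ≤ 1) :
    x ≤ invAtOne Ψ :=
  le_csSup hΨ.bddAbove_sublevel_one ⟨hx, h⟩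

lemma invAtOne_pos (hΨ : IsNFunction Ψ) : 0 < invAtOne Ψ := by
  have hsmall : ∀ᶠ x in nhdsWithin (0 : ℝ) (Set.Ioi 0), Ψ x / x < 1 ∧ x < 1 ∧ 0 < x :=
    (hΨ.2.2.2.1.eventually (gt_mem_nhds one_pos)).and
      ((eventually_nhdsWithin_of_eventually_nhds (eventually_lt_nhds one_pos)).and
        self_mem_nhdsWithin)
  obtain ⟨x, hΨx, hx1, hx0⟩ := hsmall.exists
  rw [div_lt_one hx0] at hΨx
  exact hx0.trans_le (hΨ.le_invAtOne hx0.le (by linarith))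

end IsNFunction

section Luxemburg

variable {Ψ : ℝ → ℝ} {ψ : ℕ → ℝ}

lemma norm_mul_le_invAtOne_mul (hΨ : IsNFunction Ψ) (hψ : ∀ k, 0 ≤ ψ k) {c : ℕ → ℂ} {l : ℝ}
    (hl : l ∈ luxSet Ψ ψ c) (k : ℕ) : ‖c k‖ * ψ k ≤ invAtOne Ψ * l := by
  obtain ⟨hl0, hsum, hle⟩ := hl
  have hx : ∀ i, 0 ≤ ‖c i‖ * ψ i / l := fun i => by have := hψ i; positivity
  have hterm : Ψ (‖c k‖ * ψ k / l) ≤ 1 :=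
    (hsum.le_tsum k fun i _ => hΨ.nonneg (hx i)).trans hle
  exact (div_le_iff₀ hl0).1 (hΨ.le_invAtOne (hx k) hterm)

lemma mem_luxSet_of_norm_le (hΨ : IsNFunction Ψ) {ψ' : ℕ → ℝ} {c d : ℕ → ℂ} {C l : ℝ}
    (hC : 0 < C) (hψ' : ∀ k, 0 ≤ ψ' k) (hdc : ∀ k, ‖d k‖ * ψ' k ≤ C * (‖c k‖ * ψ k))
    (hl : l ∈ luxSet Ψ ψ c) : C * l ∈ luxSet Ψ ψ' d := by
  obtain ⟨hl0, hsum, hle⟩ := hl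
  have hd0 : ∀ k, 0 ≤ ‖d k‖ * ψ' k / (C * l) := fun k => by have := hψ' k; positivity
  have hterm : ∀ k, Ψ (‖d k‖ * ψ' k / (C * l)) ≤ Ψ (‖c k‖ * ψ k / l) := fun k => by
    have harg : ‖d k‖ * ψ' k / (C * l) ≤ ‖c k‖ * ψ k / l := by
      rw [← div_div]
      exact div_le_div_of_nonneg_right ((div_le_iff₀' hC).2 (hdc k)) hl0.le
    exact hΨ.monotoneOn (hd0 k) ((hd0 k).trans harg) harg
  have hs := Summable.of_nonneg_of_le (fun k => hΨ.nonneg (hd0 k)) hterm hsum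
  exact ⟨mul_pos hC hl0, hs, (hs.tsum_le_tsum hterm hsum).trans hle⟩

lemma luxSet_nonempty_of_summable (hΨ : IsNFunction Ψ) (hψ : ∀ k, 0 ≤ ψ k) {c : ℕ → ℂ}
    (h : Summable fun k => Ψ (‖c k‖ * ψ k)) : (luxSet Ψ ψ c).Nonempty := by
  set S := ∑' k, Ψ (‖c k‖ * ψ k)
  have hx : ∀ k, 0 ≤ ‖c k‖ * ψ k := fun k => mul_nonneg (norm_nonneg _) (hψ k)
  have hS : 0 ≤ S := tsum_nonneg fun k => hΨ.nonneg (hx k)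
  have hterm : ∀ k, Ψ (‖c k‖ * ψ k / (S + 1)) ≤ Ψ (‖c k‖ * ψ k) / (S + 1) := fun k => by
    rw [div_eq_inv_mul, div_eq_inv_mul]
    exact hΨ.apply_mul_le (by positivity) (inv_le_one_of_one_le₀ (by linarith)) (hx k)
  have hs := Summable.of_nonneg_of_le (fun k => hΨ.nonneg (by have := hx k; positivity))
    hterm (h.div_const _)
  refine ⟨S + 1, by positivity, hs, ?_⟩
  calc ∑' k, Ψ (‖c k‖ * ψ k / (S + 1)) ≤ ∑' k, Ψ (‖c k‖ * ψ k) / (S + 1) :=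
        hs.tsum_le_tsum hterm (h.div_const _)
    _ = S / (S + 1) := tsum_div_const
    _ ≤ 1 := (div_le_one (by positivity)).2 (by linarith)

lemma luxSet_comp_eq (hΨ0 : Ψ 0 = 0) {d : ℕ → ℂ} {e : ℕ → ℕ} (he : Injective e)
    (hd : ∀ k ∉ Set.range e, d k = 0) : luxSet Ψ (ψ ∘ e) (d ∘ e) = luxSet Ψ ψ d := by
  ext l
  have hf : ∀ k ∉ Set.range e, Ψ (‖d k‖ * ψ k / l) = 0 := fun k hk => by simp [hd k hk, hΨ0]
  simp only [luxSet, Set.mem_ofPred_eq, Function.comp_apply]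
  rw [← he.summable_iff hf, ← he.tsum_eq (Function.support_subset_iff'.2 hf)]
  rfl

end Luxemburg

lemma norm_tailCoeff_le (a : ℤ → ℂ) (m k : ℕ) : ‖tailCoeff a m k‖ ≤ ‖a k‖ := by
  unfold tailCoeff
  split_ifs <;> simp

lemma norm_tailCoeff_mul_le {ψ : ℕ → ℝ} (hψ : Monotone ψ) (a : ℤ → ℂ) (m k : ℕ) :
    ‖tailCoeff a m k‖ * ψ (m + 1) ≤ ‖tailCoeff a m k‖ * ψ k := by
  unfold tailCoeff
  split_ifs with h
  · simp
  · exact mul_le_mul_of_nonneg_left (hψ (by omega)) (norm_nonneg _)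

lemma luxSet_tailCoeff_nonempty {Ψ : ℝ → ℝ} (hΨ : IsNFunction Ψ) {a : ℤ → ℂ} {ψ : ℕ → ℝ}
    (hψpos : ∀ k, 0 < ψ k) (haΨ : Summable fun k : ℕ => Ψ (‖a (k : ℤ)‖ * ψ k)) (m : ℕ) :
    (luxSet Ψ ψ (tailCoeff a m)).Nonempty := by
  obtain ⟨l, hl⟩ := luxSet_nonempty_of_summable hΨ (fun k => (hψpos k).le) haΨ
  refine ⟨1 * l, mem_luxSet_of_norm_le hΨ one_pos (fun k => (hψpos k).le) (fun k => ?_) hl⟩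
  rw [one_mul]
  exact mul_le_mul_of_nonneg_right (norm_tailCoeff_le a m k) (hψpos k).le

lemma QTDelta_add_right {a : ℤ → ℂ} {n j : ℕ} (hj : j ≤ n) (c : ℕ → ℂ) (m : ℕ) :
    QTDelta a n j c (m + j) = c j * tailCoeff a (n - j) m := by
  have hiff : n < m + j ↔ ¬ m ≤ n - j := by omega
  simp only [QTDelta, tailCoeff, hiff, Nat.cast_add, add_sub_cancel_right]
  split_ifs <;> ring

lemma luxSet_QTDelta {Ψ : ℝ → ℝ} (hΨ0 : Ψ 0 = 0) {a : ℤ → ℂ} {n j : ℕ} (hj : j ≤ n)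
    (c : ℕ → ℂ) : luxSet Ψ (fun _ => 1) (QTDelta a n j c) =
      luxSet Ψ (fun _ => 1) (fun m => c j * tailCoeff a (n - j) m) := by
  have hvanish : ∀ k ∉ Set.range (· + j), QTDelta a n j c k = 0 := fun k hk => by
    have hkj : k < j := by
      by_contra! h
      exact hk ⟨k - j, Nat.sub_add_cancel h⟩
    simp only [QTDelta, show ¬ n < k by omega, if_false]
  rw [← luxSet_comp_eq hΨ0 (add_left_injective j) hvanish]
  congr 1
  funext m
  exact QTDelta_add_right hj c m

lemma mem_luxSet_QTDelta {Ψ : ℝ → ℝ} (hΨ : IsNFunction Ψ) {ψ : ℕ → ℝ} (hψpos : ∀ k, 0 < ψ k)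
    (hψ : Monotone ψ) {a : ℤ → ℂ} {n j : ℕ} (hj : j ≤ n) {c : ℕ → ℂ} {lb lc : ℝ}
    (hlb : lb ∈ luxSet Ψ ψ (tailCoeff a (n - j))) (hlc : lc ∈ luxSet Ψ (fun _ => 1) c) :
    invAtOne Ψ / ψ (n - j + 1) * lb * lc ∈ luxSet Ψ (fun _ => 1) (QTDelta a n j c) := by
  rw [luxSet_QTDelta hΨ.2.1 hj]
  have hcj : ‖c j‖ ≤ invAtOne Ψ * lc := by
    simpa using norm_mul_le_invAtOne_mul hΨ (fun _ => zero_le_one) hlc j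
  have hC : 0 < invAtOne Ψ * lc / ψ (n - j + 1) :=
    div_pos (mul_pos hΨ.invAtOne_pos hlc.1) (hψpos _)
  convert mem_luxSet_of_norm_le hΨ hC (fun _ => zero_le_one) (fun m => ?_) hlb using 1
  · ring
  · rw [norm_mul, mul_one, div_mul_eq_mul_div, le_div_iff₀ (hψpos _), mul_assoc]
    exact mul_le_mul hcj (norm_tailCoeff_mul_le hψ a (n - j) m)
      (mul_nonneg (norm_nonneg _) (hψpos _).le) (mul_nonneg hΨ.invAtOne_pos.le hlc.1.le)

theorem stmt_15_general (Ψ : ℝ → ℝ) (hΨ : IsNFunction Ψ)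
    (a : ℤ → ℂ)
    (ψ : ℕ → ℝ) (hψpos : ∀ k, 0 < ψ k) (hψmono : Monotone ψ)
    (haΨ : Summable fun k : ℕ => Ψ (‖a (k : ℤ)‖ * ψ k)) :
    ∀ n : ℕ, 1 ≤ n → ∀ j : ℕ, j ≤ n → ∀ c : ℕ → ℂ, MemOrliczW Ψ (fun _ => 1) c →
      MemOrliczW Ψ (fun _ => 1) (QTDelta a n j c) ∧
      luxNormW Ψ (fun _ => 1) (QTDelta a n j c) ≤
        invAtOne Ψ / ψ (n - j + 1) *
          luxNormW Ψ ψ (fun k => if k ≤ n - j then 0 else a (k : ℤ)) *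
          luxNormW Ψ (fun _ => 1) c := by
  intro n _ j hj c ⟨lc, hlc⟩
  obtain ⟨lb, hlb⟩ := luxSet_tailCoeff_nonempty hΨ hψpos haΨ (n - j)
  refine ⟨⟨_, mem_luxSet_QTDelta hΨ hψpos hψmono hj hlb hlc⟩, ?_⟩
  exact csInf_le_mul_csInf_mul_csInf (div_nonneg hΨ.invAtOne_pos.le (hψpos _).le)
    ⟨lb, hlb⟩ ⟨lc, hlc⟩ (fun x hx => hx.1.le) (fun y hy => hy.1.le) ⟨0, fun x hx => hx.1.le⟩
    fun x hx y hy => mem_luxSet_QTDelta hΨ hψpos hψmono hj hx hy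

theorem stmt_15 (Ψ : ℝ → ℝ) (hΨ : IsNFunction Ψ)
    (a : ℤ → ℂ) (haW : Summable fun k : ℤ => ‖a k‖)
    (ψ : ℕ → ℝ) (hψpos : ∀ k, 0 < ψ k) (hψmono : Monotone ψ)
    (haΨ : Summable fun k : ℕ => Ψ (‖a (k : ℤ)‖ * ψ k)) :
    ∀ n : ℕ, 1 ≤ n → ∀ j : ℕ, j ≤ n → ∀ c : ℕ → ℂ, MemOrliczW Ψ (fun _ => 1) c →
      MemOrliczW Ψ (fun _ => 1) (QTDelta a n j c) ∧
      luxNormW Ψ (fun _ => 1) (QTDelta a n j c) ≤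
        invAtOne Ψ / ψ (n - j + 1) *
          luxNormW Ψ ψ (fun k => if k ≤ n - j then 0 else a (k : ℤ)) *
          luxNormW Ψ (fun _ => 1) c :=
  stmt_15_general Ψ hΨ a ψ hψpos hψmono haΨ
end

section
/- Let Φ, Ψ be N-functions satisfying the Δ_2^0-condition and φ, ψ ∈ 𝒲 be weight sequences. If a, b ∈ W ∩ Fℓ^{Φ,Ψ}_{φ,ψ}, then ab ∈ W ∩ Fℓ^{Φ,Ψ}_{φ,ψ} and ‖ab‖ ≤ (1 + 2C_φ + 2C_ψ)‖a‖‖b‖, where ‖·‖ = ‖·‖_W + ‖·‖_{Fℓ^{Φ,Ψ}_{φ,ψ}} and C_φ, C_ψ are the Δ_2^ℕ constants of φ, ψ. -/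
/-- Membership in `W ∩ Fℓ^{Φ,Ψ}_{φ,ψ}`. -/
def MemWF (Φ Ψ : ℝ → ℝ) (φ ψ : ℕ → ℝ) (a : ℤ → ℂ) : Prop :=
  Summable (fun k : ℤ => ‖a k‖) ∧
  MemOrliczW Φ (fun k => φ (k + 1)) (fun k => a (-(k : ℤ) - 1)) ∧
  MemOrliczW Ψ ψ (fun k => a (k : ℤ))

/-- The norm `‖a‖_W + ‖a‖_{Fℓ^{Φ,Ψ}_{φ,ψ}}`. -/
noncomputable def totalNorm (Φ Ψ : ℝ → ℝ) (φ ψ : ℕ → ℝ) (a : ℤ → ℂ) : ℝ :=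
  (∑' k : ℤ, ‖a k‖) +
    (luxNormW Φ (fun k => φ (k + 1)) (fun k => a (-(k : ℤ) - 1)) +
      luxNormW Ψ ψ (fun k => a (k : ℤ)))

open scoped ENNReal

section Helpers

variable {Ψ : ℝ → ℝ}

private lemma psi_nonneg_s18 (h0 : Ψ 0 = 0) (hpos : ∀ x : ℝ, 0 < x → 0 < Ψ x) :
    ∀ x : ℝ, 0 ≤ x → 0 ≤ Ψ x := by
  intro x hx
  rcases eq_or_lt_of_le hx with h | h
  · simp [← h, h0]
  · exact (hpos x h).le

private lemma psi_smul_le (hconv : ConvexOn ℝ (Set.Ici 0) Ψ) (h0 : Ψ 0 = 0)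
    {t y : ℝ} (ht0 : 0 ≤ t) (ht1 : t ≤ 1) (hy : 0 ≤ y) : Ψ (t * y) ≤ t * Ψ y := by
  have := hconv.2 (Set.mem_Ici.2 (le_refl (0:ℝ))) (Set.mem_Ici.2 hy)
    (by linarith : (0:ℝ) ≤ 1 - t) ht0 (by ring)
  simpa [h0, smul_eq_mul] using this

private lemma psi_mono_s18 (hconv : ConvexOn ℝ (Set.Ici 0) Ψ) (h0 : Ψ 0 = 0)
    (hpos : ∀ x : ℝ, 0 < x → 0 < Ψ x) {x y : ℝ} (hx : 0 ≤ x) (hxy : x ≤ y) :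
    Ψ x ≤ Ψ y := by
  rcases eq_or_lt_of_le (hx.trans hxy) with h | hy0
  · have hx0 : x = 0 := le_antisymm (hxy.trans h.symm.le) hx
    rw [hx0, ← h]
  · have ht1 : x / y ≤ 1 := by rw [div_le_one hy0]; exact hxy
    have h1 : Ψ (x / y * y) ≤ x / y * Ψ y :=
      psi_smul_le hconv h0 (div_nonneg hx hy0.le) ht1 hy0.le
    rw [div_mul_cancel₀ _ hy0.ne'] at h1
    have hΨy : 0 ≤ Ψ y := psi_nonneg_s18 h0 hpos y hy0.le
    nlinarith [div_nonneg hx hy0.le]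

private lemma jensen_finset (hconv : ConvexOn ℝ (Set.Ici 0) Ψ) (h0 : Ψ 0 = 0)
    {ι : Type*} (F : Finset ι) (w x : ι → ℝ)
    (hw : ∀ i ∈ F, 0 ≤ w i) (hx : ∀ i ∈ F, 0 ≤ x i) (hw1 : ∑ i ∈ F, w i ≤ 1) :
    Ψ (∑ i ∈ F, w i * x i) ≤ ∑ i ∈ F, w i * Ψ (x i) := by
  have := hconv.map_add_sum_le (v := 1 - ∑ i ∈ F, w i) (q := 0) (w := w) (p := x) hw
    (by ring) (fun i hi => Set.mem_Ici.2 (hx i hi)) (by linarith) (Set.mem_Ici.2 (le_refl 0))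
  simpa [h0, smul_eq_mul] using this

private lemma psi_le_of_forall_lt (hconv : ConvexOn ℝ (Set.Ici 0) Ψ) (h0 : Ψ 0 = 0)
    (hpos : ∀ x : ℝ, 0 < x → 0 < Ψ x) {s T : ℝ} (hs : 0 < s) (hT : 0 ≤ T)
    (hb : ∀ t : ℝ, 0 ≤ t → t < s → Ψ t ≤ T) : Ψ s ≤ T := by
  have hΨ2s : 0 ≤ Ψ (2 * s) := psi_nonneg_s18 h0 hpos _ (by linarith)
  refine le_of_forall_pos_le_add fun ε hε => ?_
  set δ : ℝ := min (s / 2) (ε * s / (Ψ (2 * s) + 1)) with hδdef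
  have hδpos : 0 < δ := lt_min (by linarith) (by positivity)
  have hδs : δ ≤ s / 2 := min_le_left _ _
  have hδ2 : δ * (Ψ (2 * s) + 1) ≤ ε * s := by
    have h1 : δ ≤ ε * s / (Ψ (2 * s) + 1) := min_le_right _ _
    have h2 : (0:ℝ) < Ψ (2 * s) + 1 := by linarith
    calc δ * (Ψ (2 * s) + 1) ≤ ε * s / (Ψ (2 * s) + 1) * (Ψ (2 * s) + 1) := by
          exact mul_le_mul_of_nonneg_right h1 h2.le
      _ = ε * s := by rw [div_mul_cancel₀ _ h2.ne']
  set t : ℝ := s - δ with htdef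
  have ht0 : 0 ≤ t := by simp only [htdef]; linarith
  have hts : t < s := by simp only [htdef]; linarith
  set lam : ℝ := s / (s + δ) with hlamdef
  have hsδ : 0 < s + δ := by linarith
  have hlam0 : 0 ≤ lam := by positivity
  have hlam1 : lam ≤ 1 := by rw [hlamdef, div_le_one hsδ]; linarith
  have hcomb : lam * t + (1 - lam) * (2 * s) = s := by
    rw [hlamdef, htdef]; field_simp; ring
  have hkey : Ψ s ≤ lam * Ψ t + (1 - lam) * Ψ (2 * s) := by
    have := hconv.2 (Set.mem_Ici.2 ht0) (Set.mem_Ici.2 (by linarith : (0:ℝ) ≤ 2 * s))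
      hlam0 (by linarith : 0 ≤ 1 - lam) (by ring)
    rw [smul_eq_mul, smul_eq_mul, smul_eq_mul, smul_eq_mul, hcomb] at this
    exact this
  have h1 : lam * Ψ t ≤ T := by
    have hΨt : Ψ t ≤ T := hb t ht0 hts
    calc lam * Ψ t ≤ lam * T := mul_le_mul_of_nonneg_left hΨt hlam0
      _ ≤ 1 * T := mul_le_mul_of_nonneg_right hlam1 hT
      _ = T := one_mul T
  have h2 : (1 - lam) * Ψ (2 * s) ≤ ε := by
    have hμ : 1 - lam = δ / (s + δ) := by rw [hlamdef]; field_simp; ring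
    rw [hμ]
    rw [div_mul_eq_mul_div, div_le_iff₀ hsδ]
    nlinarith
  linarith

private lemma my_tsum_sum_type {α β : Type*} (f : α ⊕ β → ℝ≥0∞) :
    ∑' p, f p = (∑' a, f (Sum.inl a)) + ∑' b, f (Sum.inr b) := by
  rw [← tsum_range f Sum.inl_injective, ← tsum_range f Sum.inr_injective,
    ← Set.compl_range_inl]
  exact (Summable.tsum_add_tsum_compl ENNReal.summable ENNReal.summable).symm

private lemma jensen_tsum (hconv : ConvexOn ℝ (Set.Ici 0) Ψ) (h0 : Ψ 0 = 0)
    (hpos : ∀ x : ℝ, 0 < x → 0 < Ψ x) {ι : Type*} (w x : ι → ℝ)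
    (hw : ∀ i, 0 ≤ w i) (hx : ∀ i, 0 ≤ x i)
    (hw1 : ∑' i, ENNReal.ofReal (w i) ≤ 1)
    {s : ℝ} (hs : 0 ≤ s)
    (hsle : ENNReal.ofReal s ≤ ∑' i, ENNReal.ofReal (w i * x i)) :
    ENNReal.ofReal (Ψ s) ≤ ∑' i, ENNReal.ofReal (w i * Ψ (x i)) := by
  set R := ∑' i, ENNReal.ofReal (w i * Ψ (x i)) with hRdef
  rcases eq_top_or_lt_top R with hRtop | hRlt
  · rw [hRtop]; exact le_top
  set T := R.toReal with hTdef
  have hT0 : 0 ≤ T := ENNReal.toReal_nonneg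
  have hkey : ∀ t : ℝ, 0 ≤ t → t < s → Ψ t ≤ T := by
    intro t ht0 hts
    have hspos : 0 < s := lt_of_le_of_lt ht0 hts
    have h1 : ENNReal.ofReal t < ∑' i, ENNReal.ofReal (w i * x i) :=
      lt_of_lt_of_le ((ENNReal.ofReal_lt_ofReal_iff hspos).2 hts) hsle
    rw [ENNReal.tsum_eq_iSup_sum] at h1
    obtain ⟨F, hF⟩ := lt_iSup_iff.mp h1
    rw [← ENNReal.ofReal_sum_of_nonneg (fun i _ => mul_nonneg (hw i) (hx i))] at hF
    have htF : t < ∑ i ∈ F, w i * x i := by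
      by_contra hcon
      push_neg at hcon
      exact absurd (ENNReal.ofReal_le_ofReal hcon) (not_le.mpr hF)
    have hwF : ∑ i ∈ F, w i ≤ 1 := by
      have h2 : (∑ i ∈ F, ENNReal.ofReal (w i)) ≤ 1 := le_trans (ENNReal.sum_le_tsum F) hw1
      rw [← ENNReal.ofReal_sum_of_nonneg (fun i _ => hw i)] at h2
      exact ENNReal.ofReal_le_one.mp h2
    have hjf := jensen_finset hconv h0 F w x (fun i _ => hw i) (fun i _ => hx i) hwF
    have h2 : Ψ t ≤ ∑ i ∈ F, w i * Ψ (x i) :=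
      le_trans (psi_mono_s18 hconv h0 hpos ht0 htF.le) hjf
    have h3 : ∑ i ∈ F, w i * Ψ (x i) ≤ T := by
      have h4 : ENNReal.ofReal (∑ i ∈ F, w i * Ψ (x i)) ≤ R := by
        rw [ENNReal.ofReal_sum_of_nonneg
          (fun i _ => mul_nonneg (hw i) (psi_nonneg_s18 h0 hpos _ (hx i)))]
        exact ENNReal.sum_le_tsum F
      exact (ENNReal.ofReal_le_iff_le_toReal hRlt.ne).mp h4
    linarith
  rcases eq_or_lt_of_le hs with hseq | hspos
  · rw [← hseq, h0]; simp
  · have hfin := psi_le_of_forall_lt hconv h0 hpos hspos hT0 hkey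
    calc ENNReal.ofReal (Ψ s) ≤ ENNReal.ofReal T := ENNReal.ofReal_le_ofReal hfin
      _ ≤ R := ENNReal.ofReal_toReal_le

private lemma extract_summable {ι : Type*} (g : ι → ℝ) (hg : ∀ i, 0 ≤ g i) {M : ℝ}
    (hM : 0 ≤ M) (h : ∑' i, ENNReal.ofReal (g i) ≤ ENNReal.ofReal M) :
    Summable g ∧ ∑' i, g i ≤ M := by
  have hne : ∑' i, ENNReal.ofReal (g i) ≠ ⊤ :=
    (lt_of_le_of_lt h ENNReal.ofReal_lt_top).ne
  have hsum : Summable g := by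
    have h1 := ENNReal.summable_toReal hne
    exact h1.congr fun i => ENNReal.toReal_ofReal (hg i)
  refine ⟨hsum, ?_⟩
  have h2 : ENNReal.ofReal (∑' i, g i) ≤ ENNReal.ofReal M := by
    rw [ENNReal.ofReal_tsum_of_nonneg hg hsum]; exact h
  exact (ENNReal.ofReal_le_ofReal_iff hM).mp h2

end Helpers

section Key

variable {Ψ : ℝ → ℝ}

private lemma key_lemma (hconv : ConvexOn ℝ (Set.Ici 0) Ψ) (h0 : Ψ 0 = 0)
    (hpos : ∀ x : ℝ, 0 < x → 0 < Ψ x)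
    {ι : Type*} (x y : ι → ℝ) (hx0 : ∀ l, 0 ≤ x l) (hy0 : ∀ l, 0 ≤ y l)
    (hxS : Summable fun l => Ψ (x l)) (hx1 : ∑' l, Ψ (x l) ≤ 1)
    (hyS : Summable fun l => Ψ (y l)) (hy1 : ∑' l, Ψ (y l) ≤ 1)
    (u v : ℕ → ι → ℝ) (hu0 : ∀ m l, 0 ≤ u m l) (hv0 : ∀ m l, 0 ≤ v m l)
    (A B La Lb : ℝ) (hA : 0 < A) (hB : 0 < B) (hLa : 0 < La) (hLb : 0 < Lb)
    (hurow : ∀ m, ∑' l, ENNReal.ofReal (u m l) ≤ ENNReal.ofReal B)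
    (hvrow : ∀ m, ∑' l, ENNReal.ofReal (v m l) ≤ ENNReal.ofReal A)
    (hucol : ∀ l, ∑' m, ENNReal.ofReal (u m l) ≤ ENNReal.ofReal B)
    (hvcol : ∀ l, ∑' m, ENNReal.ofReal (v m l) ≤ ENNReal.ofReal A)
    (h : ℕ → ℝ) (hh0 : ∀ m, 0 ≤ h m)
    (hh : ∀ m, ENNReal.ofReal (h m) ≤
      (∑' l, ENNReal.ofReal (u m l * (La * x l))) +
        ∑' l, ENNReal.ofReal (v m l * (Lb * y l))) :
    Summable (fun m => Ψ (h m / (B * La + A * Lb))) ∧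
      ∑' m, Ψ (h m / (B * La + A * Lb)) ≤ 1 := by
  set D : ℝ := B * La + A * Lb with hDdef
  have hD : 0 < D := by positivity
  -- Step 1: pointwise Jensen bound
  have hstep1 : ∀ m, ENNReal.ofReal (Ψ (h m / D)) ≤
      (∑' l, ENNReal.ofReal (u m l * (La / D) * Ψ (x l))) +
        ∑' l, ENNReal.ofReal (v m l * (Lb / D) * Ψ (y l)) := by
    intro m
    have hj := jensen_tsum hconv h0 hpos
      (Sum.elim (fun l => u m l * (La / D)) (fun l => v m l * (Lb / D)))
      (Sum.elim x y)
      (fun i => by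
        cases i with
        | inl l => exact mul_nonneg (hu0 m l) (by positivity)
        | inr l => exact mul_nonneg (hv0 m l) (by positivity))
      (fun i => by cases i with | inl l => exact hx0 l | inr l => exact hy0 l)
      (?_ : ∑' i, ENNReal.ofReal (Sum.elim (fun l => u m l * (La / D))
          (fun l => v m l * (Lb / D)) i) ≤ 1)
      (s := h m / D) (div_nonneg (hh0 m) hD.le)
      ?_
    · calc ENNReal.ofReal (Ψ (h m / D))
          ≤ ∑' i, ENNReal.ofReal
              (Sum.elim (fun l => u m l * (La / D)) (fun l => v m l * (Lb / D)) i *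
                Ψ (Sum.elim x y i)) := hj
        _ = _ := by
            rw [my_tsum_sum_type]
            simp only [Sum.elim_inl, Sum.elim_inr]
    · -- weights sum to ≤ 1
      rw [my_tsum_sum_type]
      simp only [Sum.elim_inl, Sum.elim_inr]
      have e1 : ∀ l, ENNReal.ofReal (u m l * (La / D)) =
          ENNReal.ofReal (u m l) * ENNReal.ofReal (La / D) :=
        fun l => ENNReal.ofReal_mul (hu0 m l)
      have e2 : ∀ l, ENNReal.ofReal (v m l * (Lb / D)) =
          ENNReal.ofReal (v m l) * ENNReal.ofReal (Lb / D) :=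
        fun l => ENNReal.ofReal_mul (hv0 m l)
      calc (∑' l, ENNReal.ofReal (u m l * (La / D))) +
            ∑' l, ENNReal.ofReal (v m l * (Lb / D))
          = (∑' l, ENNReal.ofReal (u m l)) * ENNReal.ofReal (La / D) +
              (∑' l, ENNReal.ofReal (v m l)) * ENNReal.ofReal (Lb / D) := by
            rw [tsum_congr e1, tsum_congr e2, ENNReal.tsum_mul_right, ENNReal.tsum_mul_right]
        _ ≤ ENNReal.ofReal B * ENNReal.ofReal (La / D) +
              ENNReal.ofReal A * ENNReal.ofReal (Lb / D) := by
            gcongr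
            · exact hurow m
            · exact hvrow m
        _ = ENNReal.ofReal (B * (La / D) + A * (Lb / D)) := by
            rw [← ENNReal.ofReal_mul hB.le, ← ENNReal.ofReal_mul hA.le,
              ENNReal.ofReal_add (by positivity) (by positivity)]
        _ = 1 := by
            rw [show B * (La / D) + A * (Lb / D) = 1 by field_simp; exact hDdef.symm, ENNReal.ofReal_one]
    · -- ofReal (h m / D) ≤ ∑' weights * values
      have hdiv : ENNReal.ofReal (h m / D) = ENNReal.ofReal (h m) / ENNReal.ofReal D :=
        ENNReal.ofReal_div_of_pos hD
      have hDne : ENNReal.ofReal D ≠ 0 := by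
        simp [ENNReal.ofReal_eq_zero, not_le, hD]
      have hDnetop : ENNReal.ofReal D ≠ ⊤ := ENNReal.ofReal_ne_top
      rw [hdiv]
      have h2 := ENNReal.div_le_div_right (hh m) (ENNReal.ofReal D)
      refine le_trans h2 ?_
      rw [ENNReal.add_div]
      rw [my_tsum_sum_type]
      simp only [Sum.elim_inl, Sum.elim_inr]
      gcongr
      · rw [div_eq_mul_inv, ← ENNReal.tsum_mul_right]
        refine ENNReal.tsum_le_tsum fun l => ?_
        rw [← div_eq_mul_inv, ← ENNReal.ofReal_div_of_pos hD]
        exact ENNReal.ofReal_le_ofReal (le_of_eq (by field_simp))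
      · rw [div_eq_mul_inv, ← ENNReal.tsum_mul_right]
        refine ENNReal.tsum_le_tsum fun l => ?_
        rw [← div_eq_mul_inv, ← ENNReal.ofReal_div_of_pos hD]
        exact ENNReal.ofReal_le_ofReal (le_of_eq (by field_simp))
  -- Step 2: double sums
  have hdouble : ∀ (M : ℝ), 0 < M → ∀ (u' : ℕ → ι → ℝ), (∀ m l, 0 ≤ u' m l) →
      (∀ l, ∑' m, ENNReal.ofReal (u' m l) ≤ ENNReal.ofReal M) →
      ∀ (z : ι → ℝ), (∀ l, 0 ≤ z l) → (Summable fun l => Ψ (z l)) →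
      (∑' l, Ψ (z l) ≤ 1) → ∀ L : ℝ, 0 < L →
      ∑' (m : ℕ), ∑' l, ENNReal.ofReal (u' m l * (L / D) * Ψ (z l)) ≤
        ENNReal.ofReal (M * L / D) := by
    intro M hM u' hu'0 hu'col z hz0 hzS hz1 L hL
    have hΨz : ∀ l, 0 ≤ Ψ (z l) := fun l => psi_nonneg_s18 h0 hpos _ (hz0 l)
    rw [ENNReal.tsum_comm]
    have e1 : ∀ l m, ENNReal.ofReal (u' m l * (L / D) * Ψ (z l)) =
        ENNReal.ofReal (u' m l) * ENNReal.ofReal (L / D * Ψ (z l)) := by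
      intro l m
      rw [← ENNReal.ofReal_mul (hu'0 m l), mul_assoc]
    calc ∑' l, ∑' (m : ℕ), ENNReal.ofReal (u' m l * (L / D) * Ψ (z l))
        = ∑' l, (∑' (m : ℕ), ENNReal.ofReal (u' m l)) * ENNReal.ofReal (L / D * Ψ (z l)) := by
          refine tsum_congr fun l => ?_
          rw [tsum_congr (fun m => e1 l m), ENNReal.tsum_mul_right]
      _ ≤ ∑' l, ENNReal.ofReal M * ENNReal.ofReal (L / D * Ψ (z l)) := by
          exact ENNReal.tsum_le_tsum fun l => mul_le_mul_left (hu'col l) _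
      _ = ENNReal.ofReal M * (ENNReal.ofReal (L / D) * ∑' l, ENNReal.ofReal (Ψ (z l))) := by
          rw [ENNReal.tsum_mul_left]
          congr 1
          rw [← ENNReal.tsum_mul_left]
          exact tsum_congr fun l => by rw [ENNReal.ofReal_mul (by positivity)]
      _ ≤ ENNReal.ofReal M * (ENNReal.ofReal (L / D) * ENNReal.ofReal 1) := by
          gcongr
          rw [← ENNReal.ofReal_tsum_of_nonneg hΨz hzS]
          exact ENNReal.ofReal_le_ofReal hz1
      _ = ENNReal.ofReal (M * L / D) := by
          rw [← ENNReal.ofReal_mul (by positivity), ← ENNReal.ofReal_mul hM.le]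
          norm_num
          rw [mul_div_assoc]
  have hstep2 : ∑' (m : ℕ), ENNReal.ofReal (Ψ (h m / D)) ≤ ENNReal.ofReal 1 := by
    calc ∑' (m : ℕ), ENNReal.ofReal (Ψ (h m / D))
        ≤ ∑' (m : ℕ), ((∑' l, ENNReal.ofReal (u m l * (La / D) * Ψ (x l))) +
            ∑' l, ENNReal.ofReal (v m l * (Lb / D) * Ψ (y l))) :=
          ENNReal.tsum_le_tsum hstep1
      _ = (∑' (m : ℕ), ∑' l, ENNReal.ofReal (u m l * (La / D) * Ψ (x l))) +
            ∑' (m : ℕ), ∑' l, ENNReal.ofReal (v m l * (Lb / D) * Ψ (y l)) :=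
          ENNReal.tsum_add
      _ ≤ ENNReal.ofReal (B * La / D) + ENNReal.ofReal (A * Lb / D) := by
          gcongr
          · exact hdouble B hB u hu0 hucol x hx0 hxS hx1 La hLa
          · exact hdouble A hA v hv0 hvcol y hy0 hyS hy1 Lb hLb
      _ = ENNReal.ofReal 1 := by
          rw [← ENNReal.ofReal_add (by positivity) (by positivity)]
          congr 1
          field_simp
          exact hDdef.symm
  have hres := extract_summable (fun m => Ψ (h m / D))
    (fun m => psi_nonneg_s18 h0 hpos _ (div_nonneg (hh0 m) hD.le)) zero_le_one hstep2
  exact hres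

end Key

section Conv

private lemma conv_norm {a b : ℤ → ℂ} (ha : Summable fun l : ℤ => ‖a l‖)
    (hb : Summable fun l : ℤ => ‖b l‖) (m : ℤ) :
    Summable (fun l : ℤ => ‖a l‖ * ‖b (m - l)‖) ∧
      ‖∑' l : ℤ, a l * b (m - l)‖ ≤ ∑' l : ℤ, ‖a l‖ * ‖b (m - l)‖ := by
  have hbd : ∀ l : ℤ, ‖a l‖ * ‖b (m - l)‖ ≤ ‖a l‖ * ∑' j : ℤ, ‖b j‖ := fun l =>
    mul_le_mul_of_nonneg_left (Summable.le_tsum hb (m - l) fun _ _ => norm_nonneg _) (norm_nonneg _)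
  have hs : Summable (fun l : ℤ => ‖a l‖ * ‖b (m - l)‖) :=
    Summable.of_nonneg_of_le (fun l => by positivity) hbd (ha.mul_right _)
  refine ⟨hs, ?_⟩
  have h1 : Summable (fun l : ℤ => ‖a l * b (m - l)‖) := by
    simpa [norm_mul] using hs
  have := norm_tsum_le_tsum_norm h1
  simpa [norm_mul] using this

private lemma conv_W {a b c : ℤ → ℂ} (ha : Summable fun l : ℤ => ‖a l‖)
    (hb : Summable fun l : ℤ => ‖b l‖)
    (hc : ∀ m : ℤ, c m = ∑' l : ℤ, a l * b (m - l)) :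
    Summable (fun m : ℤ => ‖c m‖) ∧
      ∑' m : ℤ, ‖c m‖ ≤ (∑' l : ℤ, ‖a l‖) * ∑' l : ℤ, ‖b l‖ := by
  have hconv_enn : ∑' m : ℤ, ENNReal.ofReal (∑' l : ℤ, ‖a l‖ * ‖b (m - l)‖) ≤
      ENNReal.ofReal ((∑' l : ℤ, ‖a l‖) * ∑' l : ℤ, ‖b l‖) := by
    have h1 : ∀ m : ℤ, ENNReal.ofReal (∑' l : ℤ, ‖a l‖ * ‖b (m - l)‖) =
        ∑' l : ℤ, ENNReal.ofReal (‖a l‖ * ‖b (m - l)‖) := fun m =>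
      ENNReal.ofReal_tsum_of_nonneg (fun l => by positivity) (conv_norm ha hb m).1
    refine le_of_eq ?_
    calc ∑' m : ℤ, ENNReal.ofReal (∑' l : ℤ, ‖a l‖ * ‖b (m - l)‖)
        = ∑' m : ℤ, ∑' l : ℤ, ENNReal.ofReal (‖a l‖ * ‖b (m - l)‖) := tsum_congr h1
      _ = ∑' l : ℤ, ∑' m : ℤ, ENNReal.ofReal (‖a l‖ * ‖b (m - l)‖) := ENNReal.tsum_comm
      _ = ∑' l : ℤ, ENNReal.ofReal ‖a l‖ * ∑' m : ℤ, ENNReal.ofReal ‖b (m - l)‖ := by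
          refine tsum_congr fun l => ?_
          rw [← ENNReal.tsum_mul_left]
          exact tsum_congr fun m => ENNReal.ofReal_mul (norm_nonneg _)
      _ = ∑' l : ℤ, ENNReal.ofReal ‖a l‖ * ∑' j : ℤ, ENNReal.ofReal ‖b j‖ := by
          refine tsum_congr fun l => ?_
          congr 1
          exact (Equiv.subRight l).tsum_eq (fun j => ENNReal.ofReal ‖b j‖)
      _ = (∑' l : ℤ, ENNReal.ofReal ‖a l‖) * ∑' j : ℤ, ENNReal.ofReal ‖b j‖ :=
          ENNReal.tsum_mul_right
      _ = ENNReal.ofReal ((∑' l : ℤ, ‖a l‖) * ∑' l : ℤ, ‖b l‖) := by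
          rw [← ENNReal.ofReal_tsum_of_nonneg (fun l => norm_nonneg _) ha,
            ← ENNReal.ofReal_tsum_of_nonneg (fun l => norm_nonneg _) hb,
            ← ENNReal.ofReal_mul (tsum_nonneg fun l => norm_nonneg _)]
  have hle : ∀ m : ℤ, ENNReal.ofReal ‖c m‖ ≤
      ENNReal.ofReal (∑' l : ℤ, ‖a l‖ * ‖b (m - l)‖) := fun m => by
    rw [hc m]; exact ENNReal.ofReal_le_ofReal (conv_norm ha hb m).2
  refine extract_summable _ (fun m => norm_nonneg _)
    (mul_nonneg (tsum_nonneg fun l => norm_nonneg _) (tsum_nonneg fun l => norm_nonneg _))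
    (le_trans (ENNReal.tsum_le_tsum hle) hconv_enn)

end Conv

section Side

open Function

private lemma side_lemma (Ψ : ℝ → ℝ) (hconv : ConvexOn ℝ (Set.Ici 0) Ψ) (h0 : Ψ 0 = 0)
    (hpos : ∀ x : ℝ, 0 < x → 0 < Ψ x)
    (C : ℝ) (hC : 0 < C)
    (e : ℕ → ℤ) (he : Function.Injective e)
    (wgt : ℤ → ℝ) (hwgt : ∀ k : ℕ, 0 ≤ wgt (e k))
    (P : ℤ → ℤ → Prop)
    (hsplitP : ∀ (m : ℕ) (l : ℤ), P (e m) l →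
      ∃ k : ℕ, e k = l ∧ wgt (e m) ≤ C * wgt (e k))
    (hsplitN : ∀ (m : ℕ) (l : ℤ), ¬ P (e m) l →
      ∃ k : ℕ, e k = e m - l ∧ wgt (e m) ≤ C * wgt (e k))
    (a b c : ℤ → ℂ) (ha : Summable fun l : ℤ => ‖a l‖) (hb : Summable fun l : ℤ => ‖b l‖)
    (hc : ∀ m : ℤ, c m = ∑' l : ℤ, a l * b (m - l))
    (hA : 0 < ∑' l : ℤ, ‖a l‖) (hB : 0 < ∑' l : ℤ, ‖b l‖)
    (La Lb : ℝ) (hLa : 0 < La) (hLb : 0 < Lb)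
    (haS : Summable fun k : ℕ => Ψ (‖a (e k)‖ * wgt (e k) / La))
    (ha1 : ∑' k : ℕ, Ψ (‖a (e k)‖ * wgt (e k) / La) ≤ 1)
    (hbS : Summable fun k : ℕ => Ψ (‖b (e k)‖ * wgt (e k) / Lb))
    (hb1 : ∑' k : ℕ, Ψ (‖b (e k)‖ * wgt (e k) / Lb) ≤ 1) :
    Summable (fun m : ℕ => Ψ (‖c (e m)‖ * wgt (e m) /
        ((C * ∑' l : ℤ, ‖b l‖) * La + (C * ∑' l : ℤ, ‖a l‖) * Lb))) ∧
      ∑' m : ℕ, Ψ (‖c (e m)‖ * wgt (e m) /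
        ((C * ∑' l : ℤ, ‖b l‖) * La + (C * ∑' l : ℤ, ‖a l‖) * Lb)) ≤ 1 := by
  classical
  set A : ℝ := ∑' l : ℤ, ‖a l‖ with hAdef
  set B : ℝ := ∑' l : ℤ, ‖b l‖ with hBdef
  set x : ℕ → ℝ := fun k => ‖a (e k)‖ * wgt (e k) / La with hxdef
  set y : ℕ → ℝ := fun k => ‖b (e k)‖ * wgt (e k) / Lb with hydef
  set u : ℕ → ℕ → ℝ := fun m k => if P (e m) (e k) then C * ‖b (e m - e k)‖ else 0 with hudef
  set v : ℕ → ℕ → ℝ :=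
    fun m k => if ¬ P (e m) (e m - e k) then C * ‖a (e m - e k)‖ else 0 with hvdef
  have hx0 : ∀ k, 0 ≤ x k := fun k => by
    simp only [hxdef]; exact div_nonneg (mul_nonneg (norm_nonneg _) (hwgt k)) hLa.le
  have hy0 : ∀ k, 0 ≤ y k := fun k => by
    simp only [hydef]; exact div_nonneg (mul_nonneg (norm_nonneg _) (hwgt k)) hLb.le
  have hu0 : ∀ m k, 0 ≤ u m k := fun m k => by
    simp only [hudef]; split
    · exact mul_nonneg hC.le (norm_nonneg _)
    · exact le_refl 0
  have hv0 : ∀ m k, 0 ≤ v m k := fun m k => by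
    simp only [hvdef]; split
    · exact mul_nonneg hC.le (norm_nonneg _)
    · exact le_refl 0
  -- row and column bounds
  have hbound : ∀ (z : ℤ → ℂ), Summable (fun l : ℤ => ‖z l‖) →
      ∀ (f : ℕ → ℤ), Function.Injective f →
      ∑' k : ℕ, ENNReal.ofReal (C * ‖z (f k)‖) ≤ ENNReal.ofReal (C * ∑' l : ℤ, ‖z l‖) := by
    intro z hz f hf
    calc ∑' k : ℕ, ENNReal.ofReal (C * ‖z (f k)‖)
        = ∑' k : ℕ, ENNReal.ofReal C * ENNReal.ofReal ‖z (f k)‖ :=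
          tsum_congr fun k => ENNReal.ofReal_mul hC.le
      _ = ENNReal.ofReal C * ∑' k : ℕ, ENNReal.ofReal ‖z (f k)‖ := ENNReal.tsum_mul_left
      _ ≤ ENNReal.ofReal C * ∑' l : ℤ, ENNReal.ofReal ‖z l‖ := by
          gcongr
          exact ENNReal.tsum_comp_le_tsum_of_injective hf (fun l => ENNReal.ofReal ‖z l‖)
      _ = ENNReal.ofReal (C * ∑' l : ℤ, ‖z l‖) := by
          rw [← ENNReal.ofReal_tsum_of_nonneg (fun l => norm_nonneg _) hz,
            ← ENNReal.ofReal_mul hC.le]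
  have hucase : ∀ m k, ENNReal.ofReal (u m k) ≤ ENNReal.ofReal (C * ‖b (e m - e k)‖) := by
    intro m k
    simp only [hudef]
    split
    · exact le_refl _
    · simp
  have hvcase : ∀ m k, ENNReal.ofReal (v m k) ≤ ENNReal.ofReal (C * ‖a (e m - e k)‖) := by
    intro m k
    simp only [hvdef]
    split
    · exact le_refl _
    · simp
  have hurow : ∀ m, ∑' k : ℕ, ENNReal.ofReal (u m k) ≤ ENNReal.ofReal (C * B) := by
    intro m
    refine le_trans (ENNReal.tsum_le_tsum (hucase m)) ?_
    refine hbound b hb (fun k => e m - e k) fun k1 k2 h12 => he ?_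
    have h12' : e m - e k1 = e m - e k2 := h12
    omega
  have hucol : ∀ k, ∑' m : ℕ, ENNReal.ofReal (u m k) ≤ ENNReal.ofReal (C * B) := by
    intro k
    refine le_trans (ENNReal.tsum_le_tsum (fun m => hucase m k)) ?_
    refine hbound b hb (fun m' => e m' - e k) fun m1 m2 h12 => ?_
    have h12' : e m1 - e k = e m2 - e k := h12
    exact he (by omega)
  have hvrow : ∀ m, ∑' k : ℕ, ENNReal.ofReal (v m k) ≤ ENNReal.ofReal (C * A) := by
    intro m
    refine le_trans (ENNReal.tsum_le_tsum (hvcase m)) ?_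
    refine hbound a ha (fun k => e m - e k) fun k1 k2 h12 => he ?_
    have h12' : e m - e k1 = e m - e k2 := h12
    omega
  have hvcol : ∀ k, ∑' m : ℕ, ENNReal.ofReal (v m k) ≤ ENNReal.ofReal (C * A) := by
    intro k
    refine le_trans (ENNReal.tsum_le_tsum (fun m => hvcase m k)) ?_
    refine hbound a ha (fun m' => e m' - e k) fun m1 m2 h12 => ?_
    have h12' : e m1 - e k = e m2 - e k := h12
    exact he (by omega)
  -- the main pointwise bound
  have hh : ∀ m : ℕ, ENNReal.ofReal (‖c (e m)‖ * wgt (e m)) ≤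
      (∑' k : ℕ, ENNReal.ofReal (u m k * (La * x k))) +
        ∑' k : ℕ, ENNReal.ofReal (v m k * (Lb * y k)) := by
    intro m
    have hcn := conv_norm ha hb (e m)
    have hstep0 : ENNReal.ofReal (‖c (e m)‖ * wgt (e m)) ≤
        ∑' l : ℤ, ENNReal.ofReal (‖a l‖ * ‖b (e m - l)‖ * wgt (e m)) := by
      rw [← ENNReal.ofReal_tsum_of_nonneg
        (fun l => mul_nonneg (mul_nonneg (norm_nonneg _) (norm_nonneg _)) (hwgt m))
        (hcn.1.mul_right _)]
      refine ENNReal.ofReal_le_ofReal ?_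
      rw [tsum_mul_right]
      refine mul_le_mul_of_nonneg_right ?_ (hwgt m)
      rw [hc (e m)]
      exact hcn.2
    refine le_trans hstep0 ?_
    -- split the sum over ℤ into the P part and the ¬P part
    set F : ℤ → ℝ≥0∞ := fun l => ENNReal.ofReal (‖a l‖ * ‖b (e m - l)‖ * wgt (e m)) with hFdef
    have hsplit : ∑' l : ℤ, F l = (∑' l : {l : ℤ // P (e m) l}, F l) +
        ∑' l : {l : ℤ // ¬ P (e m) l}, F l := by
      have := Summable.tsum_add_tsum_compl (s := {l : ℤ | P (e m) l})
        (f := F) ENNReal.summable ENNReal.summable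
      rw [← this]
      rfl
    rw [hsplit]
    gcongr
    · -- P part
      set ρ : {l : ℤ // P (e m) l} → ℕ := fun l => (hsplitP m l.1 l.2).choose with hρdef
      have hρspec : ∀ l : {l : ℤ // P (e m) l},
          e (ρ l) = l.1 ∧ wgt (e m) ≤ C * wgt (e (ρ l)) :=
        fun l => (hsplitP m l.1 l.2).choose_spec
      have hρinj : Function.Injective ρ := by
        intro l1 l2 h12
        have e1 := (hρspec l1).1
        have e2 := (hρspec l2).1
        apply Subtype.ext
        rw [← e1, ← e2, h12]
      have hptwise : ∀ l : {l : ℤ // P (e m) l},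
          F l.1 ≤ ENNReal.ofReal (u m (ρ l) * (La * x (ρ l))) := by
        intro l
        obtain ⟨hek, hwle⟩ := hρspec l
        have hP' : P (e m) (e (ρ l)) := by rw [hek]; exact l.2
        have hu' : u m (ρ l) = C * ‖b (e m - e (ρ l))‖ := by
          simp only [hudef, if_pos hP']
        have hla : La * x (ρ l) = ‖a (e (ρ l))‖ * wgt (e (ρ l)) := by
          simp only [hxdef]; field_simp
        simp only [hFdef]
        refine ENNReal.ofReal_le_ofReal ?_
        rw [hu', hla, hek]
        rw [hek] at hwle
        calc ‖a l.1‖ * ‖b (e m - l.1)‖ * wgt (e m)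
            ≤ ‖a l.1‖ * ‖b (e m - l.1)‖ * (C * wgt l.1) :=
              mul_le_mul_of_nonneg_left hwle (by positivity)
          _ = C * ‖b (e m - l.1)‖ * (‖a l.1‖ * wgt l.1) := by ring
      calc ∑' l : {l : ℤ // P (e m) l}, F l.1
          ≤ ∑' l : {l : ℤ // P (e m) l}, ENNReal.ofReal (u m (ρ l) * (La * x (ρ l))) :=
            ENNReal.tsum_le_tsum hptwise
        _ ≤ ∑' k : ℕ, ENNReal.ofReal (u m k * (La * x k)) :=
            ENNReal.tsum_comp_le_tsum_of_injective hρinj _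
    · -- ¬P part
      set ρ : {l : ℤ // ¬ P (e m) l} → ℕ := fun l => (hsplitN m l.1 l.2).choose with hρdef
      have hρspec : ∀ l : {l : ℤ // ¬ P (e m) l},
          e (ρ l) = e m - l.1 ∧ wgt (e m) ≤ C * wgt (e (ρ l)) :=
        fun l => (hsplitN m l.1 l.2).choose_spec
      have hρinj : Function.Injective ρ := by
        intro l1 l2 h12
        have e1 := (hρspec l1).1
        have e2 := (hρspec l2).1
        apply Subtype.ext
        have : e m - l1.1 = e m - l2.1 := by rw [← e1, ← e2, h12]
        omega
      have hptwise : ∀ l : {l : ℤ // ¬ P (e m) l},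
          F l.1 ≤ ENNReal.ofReal (v m (ρ l) * (Lb * y (ρ l))) := by
        intro l
        obtain ⟨hek, hwle⟩ := hρspec l
        have hsub : e m - e (ρ l) = l.1 := by omega
        have hN' : ¬ P (e m) (e m - e (ρ l)) := by rw [hsub]; exact l.2
        have hv' : v m (ρ l) = C * ‖a l.1‖ := by
          simp only [hvdef, if_pos hN', hsub]
        have hlb : Lb * y (ρ l) = ‖b (e (ρ l))‖ * wgt (e (ρ l)) := by
          simp only [hydef]; field_simp
        simp only [hFdef]
        refine ENNReal.ofReal_le_ofReal ?_
        rw [hv', hlb, hek]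
        rw [hek] at hwle
        calc ‖a l.1‖ * ‖b (e m - l.1)‖ * wgt (e m)
            ≤ ‖a l.1‖ * ‖b (e m - l.1)‖ * (C * wgt (e m - l.1)) :=
              mul_le_mul_of_nonneg_left hwle (by positivity)
          _ = C * ‖a l.1‖ * (‖b (e m - l.1)‖ * wgt (e m - l.1)) := by ring
      calc ∑' l : {l : ℤ // ¬ P (e m) l}, F l.1
          ≤ ∑' l : {l : ℤ // ¬ P (e m) l}, ENNReal.ofReal (v m (ρ l) * (Lb * y (ρ l))) :=
            ENNReal.tsum_le_tsum hptwise
        _ ≤ ∑' k : ℕ, ENNReal.ofReal (v m k * (Lb * y k)) :=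
            ENNReal.tsum_comp_le_tsum_of_injective hρinj _
  -- apply the key lemma
  have hkey := key_lemma hconv h0 hpos x y hx0 hy0 haS ha1 hbS hb1 u v hu0 hv0
    (C * A) (C * B) La Lb (by positivity) (by positivity) hLa hLb
    hurow hvrow hucol hvcol
    (fun m => ‖c (e m)‖ * wgt (e m))
    (fun m => mul_nonneg (norm_nonneg _) (hwgt m))
    hh
  exact hkey

end Side

private lemma inf_juggle {S T : Set ℝ} (hS : S.Nonempty) (hT : T.Nonempty)
    {r p q : ℝ} (hp : 0 < p) (hq : 0 < q)
    (h : ∀ s ∈ S, ∀ t ∈ T, r ≤ p * s + q * t) : r ≤ p * sInf S + q * sInf T := by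
  have h1 : ∀ t ∈ T, r - q * t ≤ sInf S * p := by
    intro t ht
    refine (div_le_iff₀ hp).mp (le_csInf hS fun s hs => ?_)
    rw [div_le_iff₀ hp]
    nlinarith [h s hs t ht]
  have h2 : r - p * sInf S ≤ sInf T * q := by
    refine (div_le_iff₀ hq).mp (le_csInf hT fun t ht => ?_)
    rw [div_le_iff₀ hq]
    nlinarith [h1 t ht]
  nlinarith

private lemma lux_nonneg (Θ : ℝ → ℝ) (w : ℕ → ℝ) (d : ℕ → ℂ) : 0 ≤ luxNormW Θ w d := by
  apply Real.sInf_nonneg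
  rintro x ⟨hx, -, -⟩
  exact hx.le

private lemma lux_zero (Θ : ℝ → ℝ) (hΘ0 : Θ 0 = 0) (w : ℕ → ℝ) (d : ℕ → ℂ)
    (hd : ∀ k, d k = 0) : luxNormW Θ w d = 0 := by
  unfold luxNormW
  have hset : {l : ℝ | 0 < l ∧ Summable (fun k => Θ (‖d k‖ * w k / l)) ∧
      ∑' k, Θ (‖d k‖ * w k / l) ≤ 1} = Set.Ioi 0 := by
    ext l
    simp only [Set.mem_setOf_eq, Set.mem_Ioi]
    constructor
    · rintro ⟨h, -, -⟩; exact h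
    · intro h
      have hfun : (fun k => Θ (‖d k‖ * w k / l)) = fun _ => 0 := funext fun k => by
        rw [hd k]; simp [hΘ0]
      refine ⟨h, by rw [hfun]; exact summable_zero, by rw [hfun]; simp⟩
  rw [hset]
  exact csInf_Ioi

theorem stmt_18 (Φ Ψ : ℝ → ℝ) (hΦ : IsNFunction Φ) (hΨ : IsNFunction Ψ)
    (hΦ2 : Delta20 Φ) (hΨ2 : Delta20 Ψ)
    (φ ψ : ℕ → ℝ) (Cφ Cψ : ℝ)
    (hφpos : ∀ k, 0 < φ k) (hφ0 : φ 0 = 1) (hφmono : Monotone φ)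
    (hCφ : 0 < Cφ) (hφΔ : ∀ k : ℕ, 1 ≤ k → φ (2 * k) ≤ Cφ * φ k)
    (hψpos : ∀ k, 0 < ψ k) (hψ0 : ψ 0 = 1) (hψmono : Monotone ψ)
    (hCψ : 0 < Cψ) (hψΔ : ∀ k : ℕ, 1 ≤ k → ψ (2 * k) ≤ Cψ * ψ k)
    (a b : ℤ → ℂ) (haM : MemWF Φ Ψ φ ψ a) (hbM : MemWF Φ Ψ φ ψ b)
    (c : ℤ → ℂ) (hc : ∀ m : ℤ, c m = ∑' l : ℤ, a l * b (m - l)) :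
    MemWF Φ Ψ φ ψ c ∧
    totalNorm Φ Ψ φ ψ c ≤
      (1 + 2 * Cφ + 2 * Cψ) * totalNorm Φ Ψ φ ψ a * totalNorm Φ Ψ φ ψ b := by
  classical
  obtain ⟨hΦconv, hΦ0, hΦpos, -, -⟩ := hΦ
  obtain ⟨hΨconv, hΨ0, hΨpos, -, -⟩ := hΨ
  obtain ⟨haW, haN, haP⟩ := haM
  obtain ⟨hbW, hbN, hbP⟩ := hbM
  have hCφ1 : 1 ≤ Cφ := by
    have h2 := hφΔ 1 le_rfl
    norm_num at h2
    nlinarith [hφmono (show (1:ℕ) ≤ 2 by norm_num), hφpos 1]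
  have hCψ1 : 1 ≤ Cψ := by
    have h2 := hψΔ 1 le_rfl
    norm_num at h2
    nlinarith [hψmono (show (1:ℕ) ≤ 2 by norm_num), hψpos 1]
  have hcoef : (0:ℝ) ≤ 1 + 2 * Cφ + 2 * Cψ := by linarith
  by_cases hzab : (∀ l, a l = 0) ∨ (∀ l, b l = 0)
  · -- degenerate case : `c = 0`
    have hc0 : ∀ m, c m = 0 := by
      intro m
      rw [hc m]
      rcases hzab with h | h
      · have : (fun l : ℤ => a l * b (m - l)) = fun _ => 0 :=
          funext fun l => by rw [h l, zero_mul]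
        rw [this, tsum_zero]
      · have : (fun l : ℤ => a l * b (m - l)) = fun _ => 0 :=
          funext fun l => by rw [h (m - l), mul_zero]
        rw [this, tsum_zero]
    have hcnorm : (fun k : ℤ => ‖c k‖) = fun _ => 0 := funext fun k => by
      rw [hc0 k, norm_zero]
    constructor
    · refine ⟨by rw [hcnorm]; exact summable_zero, ?_, ?_⟩
      · have hfun : (fun k : ℕ => Φ (‖c (-(k:ℤ) - 1)‖ * φ (k + 1) / 1)) = fun _ => 0 :=
          funext fun k => by rw [hc0]; simp [hΦ0]
        exact ⟨1, one_pos, by rw [hfun]; exact summable_zero, by rw [hfun]; simp⟩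
      · have hfun : (fun k : ℕ => Ψ (‖c ((k:ℕ):ℤ)‖ * ψ k / 1)) = fun _ => 0 :=
          funext fun k => by rw [hc0]; simp [hΨ0]
        exact ⟨1, one_pos, by rw [hfun]; exact summable_zero, by rw [hfun]; simp⟩
    · have hWc : ∑' k : ℤ, ‖c k‖ = 0 := by rw [hcnorm]; exact tsum_zero
      have hl1 : luxNormW Φ (fun k => φ (k + 1)) (fun k => c (-(k:ℤ) - 1)) = 0 :=
        lux_zero Φ hΦ0 _ _ fun k => hc0 _
      have hl2 : luxNormW Ψ ψ (fun k => c ((k:ℕ):ℤ)) = 0 :=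
        lux_zero Ψ hΨ0 _ _ fun k => hc0 _
      have hTa : 0 ≤ totalNorm Φ Ψ φ ψ a := by
        unfold totalNorm
        have h1 := lux_nonneg Φ (fun k => φ (k + 1)) (fun k => a (-(k:ℤ) - 1))
        have h2 := lux_nonneg Ψ ψ (fun k => a ((k:ℕ):ℤ))
        have h3 : 0 ≤ ∑' k : ℤ, ‖a k‖ := tsum_nonneg (fun k : ℤ => norm_nonneg (a k))
        linarith
      have hTb : 0 ≤ totalNorm Φ Ψ φ ψ b := by
        unfold totalNorm
        have h1 := lux_nonneg Φ (fun k => φ (k + 1)) (fun k => b (-(k:ℤ) - 1))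
        have h2 := lux_nonneg Ψ ψ (fun k => b ((k:ℕ):ℤ))
        have h3 : 0 ≤ ∑' k : ℤ, ‖b k‖ := tsum_nonneg (fun k : ℤ => norm_nonneg (b k))
        linarith
      have hpos : 0 ≤ (1 + 2 * Cφ + 2 * Cψ) * totalNorm Φ Ψ φ ψ a * totalNorm Φ Ψ φ ψ b :=
        mul_nonneg (mul_nonneg hcoef hTa) hTb
      unfold totalNorm
      unfold totalNorm at hpos
      rw [hWc, hl1, hl2]
      linarith
  · -- main case
    push_neg at hzab
    obtain ⟨⟨la0, hla0⟩, ⟨lb0, hlb0⟩⟩ := hzab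
    have hA : 0 < ∑' l : ℤ, ‖a l‖ :=
      Summable.tsum_pos haW (fun l => norm_nonneg _) la0 (norm_pos_iff.mpr hla0)
    have hB : 0 < ∑' l : ℤ, ‖b l‖ :=
      Summable.tsum_pos hbW (fun l => norm_nonneg _) lb0 (norm_pos_iff.mpr hlb0)
    have hcW := conv_W haW hbW hc
    have hψcore : ∀ (m k : ℕ), m ≤ 2 * k → ψ m ≤ Cψ * ψ k := by
      intro m k hmk
      rcases Nat.eq_zero_or_pos k with rfl | hk
      · have hm : m = 0 := by omega
        subst hm
        nlinarith [hψpos 0]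
      · calc ψ m ≤ ψ (2 * k) := hψmono hmk
          _ ≤ Cψ * ψ k := hψΔ k hk
    have hφcore : ∀ (m k : ℕ), m ≤ 2 * k → φ m ≤ Cφ * φ k := by
      intro m k hmk
      rcases Nat.eq_zero_or_pos k with rfl | hk
      · have hm : m = 0 := by omega
        subst hm
        nlinarith [hφpos 0]
      · calc φ m ≤ φ (2 * k) := hφmono hmk
          _ ≤ Cφ * φ k := hφΔ k hk
    have hcast : ∀ k : ℕ, (((k:ℕ):ℤ)).toNat = k := fun k => Int.toNat_natCast k
    have hcast2 : ∀ k : ℕ, ((-(-(k:ℤ) - 1)).toNat) = k + 1 := fun k => by omega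
    -- positive side
    have hposmem : ∀ La Lb : ℝ, 0 < La → 0 < Lb →
        Summable (fun k : ℕ => Ψ (‖a ((k:ℕ):ℤ)‖ * ψ k / La)) →
        (∑' k : ℕ, Ψ (‖a ((k:ℕ):ℤ)‖ * ψ k / La)) ≤ 1 →
        Summable (fun k : ℕ => Ψ (‖b ((k:ℕ):ℤ)‖ * ψ k / Lb)) →
        (∑' k : ℕ, Ψ (‖b ((k:ℕ):ℤ)‖ * ψ k / Lb)) ≤ 1 →
        Summable (fun k : ℕ => Ψ (‖c ((k:ℕ):ℤ)‖ * ψ k /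
            ((Cψ * ∑' l : ℤ, ‖b l‖) * La + (Cψ * ∑' l : ℤ, ‖a l‖) * Lb))) ∧
          ∑' k : ℕ, Ψ (‖c ((k:ℕ):ℤ)‖ * ψ k /
            ((Cψ * ∑' l : ℤ, ‖b l‖) * La + (Cψ * ∑' l : ℤ, ‖a l‖) * Lb)) ≤ 1 := by
      intro La Lb hLa hLb haS' ha1' hbS' hb1'
      have hres := side_lemma Ψ hΨconv hΨ0 hΨpos Cψ hCψ
        (fun k : ℕ => (k:ℤ)) (fun k1 k2 h => by
          have h' : (k1:ℤ) = (k2:ℤ) := h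
          exact_mod_cast h')
        (fun n : ℤ => ψ n.toNat) (fun k => (hψpos _).le)
        (fun m l => m ≤ 2 * l)
        (fun m l hP => by
          have hP' : (m:ℤ) ≤ 2 * l := hP
          refine ⟨l.toNat, ?_, ?_⟩
          · show ((l.toNat:ℕ):ℤ) = l
            omega
          · show ψ (((m:ℕ):ℤ)).toNat ≤ Cψ * ψ (((l.toNat:ℕ):ℤ)).toNat
            rw [hcast, hcast]
            exact hψcore m l.toNat (by omega))
        (fun m l hN => by
          have hN' : ¬ ((m:ℤ) ≤ 2 * l) := hN
          refine ⟨((m:ℤ) - l).toNat, ?_, ?_⟩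
          · show ((((m:ℤ) - l).toNat:ℕ):ℤ) = (m:ℤ) - l
            omega
          · show ψ (((m:ℕ):ℤ)).toNat ≤ Cψ * ψ (((((m:ℤ) - l).toNat:ℕ):ℤ)).toNat
            rw [hcast, hcast]
            exact hψcore m ((m:ℤ) - l).toNat (by omega))
        a b c haW hbW hc hA hB La Lb hLa hLb
        (by simpa only [hcast] using haS') (by simpa only [hcast] using ha1')
        (by simpa only [hcast] using hbS') (by simpa only [hcast] using hb1')
      exact ⟨by simpa only [hcast] using hres.1, by simpa only [hcast] using hres.2⟩
    -- negative side
    have hnegmem : ∀ La Lb : ℝ, 0 < La → 0 < Lb →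
        Summable (fun k : ℕ => Φ (‖a (-(k:ℤ) - 1)‖ * φ (k + 1) / La)) →
        (∑' k : ℕ, Φ (‖a (-(k:ℤ) - 1)‖ * φ (k + 1) / La)) ≤ 1 →
        Summable (fun k : ℕ => Φ (‖b (-(k:ℤ) - 1)‖ * φ (k + 1) / Lb)) →
        (∑' k : ℕ, Φ (‖b (-(k:ℤ) - 1)‖ * φ (k + 1) / Lb)) ≤ 1 →
        Summable (fun k : ℕ => Φ (‖c (-(k:ℤ) - 1)‖ * φ (k + 1) /
            ((Cφ * ∑' l : ℤ, ‖b l‖) * La + (Cφ * ∑' l : ℤ, ‖a l‖) * Lb))) ∧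
          ∑' k : ℕ, Φ (‖c (-(k:ℤ) - 1)‖ * φ (k + 1) /
            ((Cφ * ∑' l : ℤ, ‖b l‖) * La + (Cφ * ∑' l : ℤ, ‖a l‖) * Lb)) ≤ 1 := by
      intro La Lb hLa hLb haS' ha1' hbS' hb1'
      have hres := side_lemma Φ hΦconv hΦ0 hΦpos Cφ hCφ
        (fun k : ℕ => -(k:ℤ) - 1) (fun k1 k2 h => by
          have h' : -(k1:ℤ) - 1 = -(k2:ℤ) - 1 := h
          omega)
        (fun n : ℤ => φ (-n).toNat) (fun k => (hφpos _).le)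
        (fun m l => 2 * l ≤ m)
        (fun m l hP => by
          have hP' : 2 * l ≤ -(m:ℤ) - 1 := hP
          refine ⟨(-l - 1).toNat, ?_, ?_⟩
          · show -(((-l - 1).toNat:ℕ):ℤ) - 1 = l
            omega
          · show φ ((-(-(m:ℤ) - 1)).toNat) ≤ Cφ * φ ((-(-(((-l - 1).toNat:ℕ):ℤ) - 1)).toNat)
            rw [hcast2, hcast2]
            exact hφcore (m + 1) ((-l - 1).toNat + 1) (by omega))
        (fun m l hN => by
          have hN' : ¬ (2 * l ≤ -(m:ℤ) - 1) := hN
          refine ⟨((m:ℤ) + l).toNat, ?_, ?_⟩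
          · show -((((m:ℤ) + l).toNat:ℕ):ℤ) - 1 = (-(m:ℤ) - 1) - l
            omega
          · show φ ((-(-(m:ℤ) - 1)).toNat) ≤
              Cφ * φ ((-(-((((m:ℤ) + l).toNat:ℕ):ℤ) - 1)).toNat)
            rw [hcast2, hcast2]
            exact hφcore (m + 1) (((m:ℤ) + l).toNat + 1) (by omega))
        a b c haW hbW hc hA hB La Lb hLa hLb
        (by simpa only [hcast2] using haS') (by simpa only [hcast2] using ha1')
        (by simpa only [hcast2] using hbS') (by simpa only [hcast2] using hb1')
      exact ⟨by simpa only [hcast2] using hres.1, by simpa only [hcast2] using hres.2⟩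
    obtain ⟨LaN, hLaN0, hLaNS, hLaN1⟩ := haN
    obtain ⟨LaP, hLaP0, hLaPS, hLaP1⟩ := haP
    obtain ⟨LbN, hLbN0, hLbNS, hLbN1⟩ := hbN
    obtain ⟨LbP, hLbP0, hLbPS, hLbP1⟩ := hbP
    have hmemN := hnegmem LaN LbN hLaN0 hLbN0 hLaNS hLaN1 hLbNS hLbN1
    have hmemP := hposmem LaP LbP hLaP0 hLbP0 hLaPS hLaP1 hLbPS hLbP1
    have hDN0 : 0 < (Cφ * ∑' l : ℤ, ‖b l‖) * LaN + (Cφ * ∑' l : ℤ, ‖a l‖) * LbN :=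
      add_pos (mul_pos (mul_pos hCφ hB) hLaN0) (mul_pos (mul_pos hCφ hA) hLbN0)
    have hDP0 : 0 < (Cψ * ∑' l : ℤ, ‖b l‖) * LaP + (Cψ * ∑' l : ℤ, ‖a l‖) * LbP :=
      add_pos (mul_pos (mul_pos hCψ hB) hLaP0) (mul_pos (mul_pos hCψ hA) hLbP0)
    constructor
    · exact ⟨hcW.1, ⟨_, hDN0, hmemN.1, hmemN.2⟩, ⟨_, hDP0, hmemP.1, hmemP.2⟩⟩
    · -- the norm estimate
      have hjN : luxNormW Φ (fun k => φ (k + 1)) (fun k => c (-(k:ℤ) - 1)) ≤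
          (Cφ * ∑' l : ℤ, ‖b l‖) *
            luxNormW Φ (fun k => φ (k + 1)) (fun k => a (-(k:ℤ) - 1)) +
          (Cφ * ∑' l : ℤ, ‖a l‖) *
            luxNormW Φ (fun k => φ (k + 1)) (fun k => b (-(k:ℤ) - 1)) := by
        unfold luxNormW
        refine inf_juggle ?_ ?_ (mul_pos hCφ hB) (mul_pos hCφ hA) ?_
        · exact ⟨LaN, hLaN0, hLaNS, hLaN1⟩
        · exact ⟨LbN, hLbN0, hLbNS, hLbN1⟩
        rintro s ⟨hs0, hsS, hs1⟩ t ⟨ht0, htS, ht1⟩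
        have hmem := hnegmem s t hs0 ht0 hsS hs1 htS ht1
        have hd0 : 0 < (Cφ * ∑' l : ℤ, ‖b l‖) * s + (Cφ * ∑' l : ℤ, ‖a l‖) * t :=
          add_pos (mul_pos (mul_pos hCφ hB) hs0) (mul_pos (mul_pos hCφ hA) ht0)
        exact csInf_le ⟨0, fun z hz => hz.1.le⟩ ⟨hd0, hmem.1, hmem.2⟩
      have hjP : luxNormW Ψ ψ (fun k => c ((k:ℕ):ℤ)) ≤
          (Cψ * ∑' l : ℤ, ‖b l‖) * luxNormW Ψ ψ (fun k => a ((k:ℕ):ℤ)) +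
          (Cψ * ∑' l : ℤ, ‖a l‖) * luxNormW Ψ ψ (fun k => b ((k:ℕ):ℤ)) := by
        unfold luxNormW
        refine inf_juggle ?_ ?_ (mul_pos hCψ hB) (mul_pos hCψ hA) ?_
        · exact ⟨LaP, hLaP0, hLaPS, hLaP1⟩
        · exact ⟨LbP, hLbP0, hLbPS, hLbP1⟩
        rintro s ⟨hs0, hsS, hs1⟩ t ⟨ht0, htS, ht1⟩
        have hmem := hposmem s t hs0 ht0 hsS hs1 htS ht1
        have hd0 : 0 < (Cψ * ∑' l : ℤ, ‖b l‖) * s + (Cψ * ∑' l : ℤ, ‖a l‖) * t :=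
          add_pos (mul_pos (mul_pos hCψ hB) hs0) (mul_pos (mul_pos hCψ hA) ht0)
        exact csInf_le ⟨0, fun z hz => hz.1.le⟩ ⟨hd0, hmem.1, hmem.2⟩
      -- put everything together
      unfold totalNorm
      have hanN := lux_nonneg Φ (fun k => φ (k + 1)) (fun k => a (-(k:ℤ) - 1))
      have hanP := lux_nonneg Ψ ψ (fun k => a ((k:ℕ):ℤ))
      have hbnN := lux_nonneg Φ (fun k => φ (k + 1)) (fun k => b (-(k:ℤ) - 1))
      have hbnP := lux_nonneg Ψ ψ (fun k => b ((k:ℕ):ℤ))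
      set A := ∑' l : ℤ, ‖a l‖ with hAdef
      set B := ∑' l : ℤ, ‖b l‖ with hBdef
      set anN := luxNormW Φ (fun k => φ (k + 1)) (fun k => a (-(k:ℤ) - 1)) with hanNdef
      set anP := luxNormW Ψ ψ (fun k => a ((k:ℕ):ℤ)) with hanPdef
      set bnN := luxNormW Φ (fun k => φ (k + 1)) (fun k => b (-(k:ℤ) - 1)) with hbnNdef
      set bnP := luxNormW Ψ ψ (fun k => b ((k:ℕ):ℤ)) with hbnPdef
      set cnN := luxNormW Φ (fun k => φ (k + 1)) (fun k => c (-(k:ℤ) - 1)) with hcnNdef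
      set cnP := luxNormW Ψ ψ (fun k => c ((k:ℕ):ℤ)) with hcnPdef
      have hW := hcW.2
      have hANa : A ≤ A + (anN + anP) := by linarith
      have hanNa : anN ≤ A + (anN + anP) := by linarith [hA, hanP]
      have hanPa : anP ≤ A + (anN + anP) := by linarith [hA, hanN]
      have hBNb : B ≤ B + (bnN + bnP) := by linarith
      have hbnNb : bnN ≤ B + (bnN + bnP) := by linarith [hB, hbnP]
      have hbnPb : bnP ≤ B + (bnN + bnP) := by linarith [hB, hbnN]
      have hNa0 : 0 ≤ A + (anN + anP) := by linarith [hA.le]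
      have hNb0 : 0 ≤ B + (bnN + bnP) := by linarith [hB.le]
      have q1 : A * B ≤ (A + (anN + anP)) * (B + (bnN + bnP)) :=
        mul_le_mul hANa hBNb hB.le hNa0
      have p2 : B * anN ≤ (B + (bnN + bnP)) * (A + (anN + anP)) :=
        mul_le_mul hBNb hanNa hanN hNb0
      have p3 : A * bnN ≤ (A + (anN + anP)) * (B + (bnN + bnP)) :=
        mul_le_mul hANa hbnNb hbnN hNa0
      have p4 : B * anP ≤ (B + (bnN + bnP)) * (A + (anN + anP)) :=
        mul_le_mul hBNb hanPa hanP hNb0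
      have p5 : A * bnP ≤ (A + (anN + anP)) * (B + (bnN + bnP)) :=
        mul_le_mul hANa hbnPb hbnP hNa0
      have q2 : Cφ * (B * anN) ≤ Cφ * ((B + (bnN + bnP)) * (A + (anN + anP))) :=
        mul_le_mul_of_nonneg_left p2 hCφ.le
      have q3 : Cφ * (A * bnN) ≤ Cφ * ((A + (anN + anP)) * (B + (bnN + bnP))) :=
        mul_le_mul_of_nonneg_left p3 hCφ.le
      have q4 : Cψ * (B * anP) ≤ Cψ * ((B + (bnN + bnP)) * (A + (anN + anP))) :=
        mul_le_mul_of_nonneg_left p4 hCψ.le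
      have q5 : Cψ * (A * bnP) ≤ Cψ * ((A + (anN + anP)) * (B + (bnN + bnP))) :=
        mul_le_mul_of_nonneg_left p5 hCψ.le
      linarith [hjN, hjP, hW, q1, q2, q3, q4, q5]
end

section
/- Let a_− , a_+ ∈ W with a_−^{±1} ∈ W ∩ H_−^∞ and a_+^{±1} ∈ W ∩ H_+^∞, and set a = a_− a_+. Then the semi-infinite Toeplitz operator T(a) is invertible on ℓ^Ψ(ℤ_+) for any N-function Ψ, with inverse T^{-1}(a) = T(a_+^{-1}) T(a_−^{-1}). -/
namespace NFAux

variable {Ψ : ℝ → ℝ}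

lemma nonneg (h : IsNFunction Ψ) {x : ℝ} (hx : 0 ≤ x) : 0 ≤ Ψ x := by
  rcases hx.eq_or_lt with h0 | h0
  · rw [← h0, h.2.1]
  · exact (h.2.2.1 x h0).le

lemma smul_le (h : IsNFunction Ψ) {s y : ℝ} (hs0 : 0 ≤ s) (hs1 : s ≤ 1) (hy : 0 ≤ y) :
    Ψ (s * y) ≤ s * Ψ y := by
  have := h.1.2 (Set.self_mem_Ici (a := (0:ℝ))) (Set.mem_Ici.2 hy)
    (sub_nonneg.2 hs1) hs0 (by ring)
  simpa [h.2.1] using this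

lemma mono (h : IsNFunction Ψ) {x y : ℝ} (hx : 0 ≤ x) (hxy : x ≤ y) : Ψ x ≤ Ψ y := by
  rcases (hx.trans hxy).eq_or_lt with h0 | h0
  · have hx0 : x = 0 := le_antisymm (hxy.trans h0.symm.le) hx
    rw [hx0, ← h0]
  · have hxy' : x = (x / y) * y := by field_simp
    calc Ψ x = Ψ ((x / y) * y) := by rw [← hxy']
      _ ≤ (x / y) * Ψ y := smul_le h (div_nonneg hx h0.le) (div_le_one_of_le₀ hxy h0.le) h0.le
      _ ≤ 1 * Ψ y := by
          apply mul_le_mul_of_nonneg_right (div_le_one_of_le₀ hxy h0.le) (nonneg h h0.le)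
      _ = Ψ y := one_mul _

lemma jensen_finset (h : IsNFunction Ψ) (w u : ℕ → ℝ) (hw : ∀ k, 0 ≤ w k) (hu : ∀ k, 0 ≤ u k)
    (F : Finset ℕ) (hF : ∑ k ∈ F, w k ≤ 1) :
    Ψ (∑ k ∈ F, w k * u k) ≤ ∑ k ∈ F, w k * Ψ (u k) := by
  set σ := ∑ k ∈ F, w k with hσdef
  have hσ0 : 0 ≤ σ := Finset.sum_nonneg fun k _ => hw k
  rcases hσ0.eq_or_lt with hσ | hσ
  · have hz : ∀ k ∈ F, w k = 0 := by
      intro k hk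
      have := (Finset.sum_eq_zero_iff_of_nonneg (fun k _ => hw k)).1 hσ.symm
      exact this k hk
    have h1 : ∑ k ∈ F, w k * u k = 0 := Finset.sum_eq_zero fun k hk => by rw [hz k hk, zero_mul]
    have h2 : ∑ k ∈ F, w k * Ψ (u k) = 0 := Finset.sum_eq_zero fun k hk => by rw [hz k hk, zero_mul]
    rw [h1, h2, h.2.1]
  · have key : Ψ (∑ k ∈ F, (w k / σ) • u k) ≤ ∑ k ∈ F, (w k / σ) • Ψ (u k) :=
      h.1.map_sum_le (fun k _ => div_nonneg (hw k) hσ0)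
        (by rw [← Finset.sum_div]; field_simp; exact hσdef.symm)
        (fun k _ => Set.mem_Ici.2 (hu k))
    have hmean0 : 0 ≤ ∑ k ∈ F, (w k / σ) • u k :=
      Finset.sum_nonneg fun k _ => smul_nonneg (div_nonneg (hw k) hσ0) (hu k)
    calc Ψ (∑ k ∈ F, w k * u k) = Ψ (σ * ∑ k ∈ F, (w k / σ) • u k) := by
          rw [Finset.mul_sum]
          congr 1
          refine Finset.sum_congr rfl fun k _ => ?_
          rw [smul_eq_mul]; field_simp
      _ ≤ σ * ∑ k ∈ F, (w k / σ) • Ψ (u k) := by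
          refine (smul_le h hσ0 hF hmean0).trans ?_
          exact mul_le_mul_of_nonneg_left key hσ0
      _ = ∑ k ∈ F, w k * Ψ (u k) := by
          rw [Finset.mul_sum]
          refine Finset.sum_congr rfl fun k _ => ?_
          rw [smul_eq_mul]; field_simp


lemma jensen_tsum (h : IsNFunction Ψ) (w u : ℕ → ℝ) (hw : ∀ k, 0 ≤ w k) (hu : ∀ k, 0 ≤ u k)
    (hwu : Summable fun k => w k * u k) (hwP : Summable fun k => w k * Ψ (u k))
    (hw1 : ∀ F : Finset ℕ, ∑ k ∈ F, w k ≤ 1) :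
    Ψ (∑' k, w k * u k) ≤ ∑' k, w k * Ψ (u k) := by
  set t := ∑' k, w k * u k with ht
  have ht0 : 0 ≤ t := tsum_nonneg fun k => mul_nonneg (hw k) (hu k)
  have hR0 : 0 ≤ ∑' k, w k * Ψ (u k) := tsum_nonneg fun k => mul_nonneg (hw k) (nonneg h (hu k))
  rcases ht0.eq_or_lt with h0 | h0
  · rw [← h0, h.2.1]; exact hR0
  · set K := Ψ (2 * t) / t with hK
    have hK0 : 0 ≤ K := div_nonneg (nonneg h (by linarith)) ht0
    have key : ∀ s : ℝ, 0 ≤ s → s ≤ t → Ψ t ≤ Ψ s + K * (t - s) := by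
      intro s hs hst
      have h2ts : t ≤ 2 * t - s := by linarith
      have hpos : (0:ℝ) < 2 * t - s := by linarith
      set lam := t / (2 * t - s) with hlam
      have hlam0 : 0 ≤ lam := div_nonneg ht0 hpos.le
      have hlam1 : lam ≤ 1 := div_le_one_of_le₀ h2ts hpos.le
      have hconv := h.1.2 (Set.mem_Ici.2 hs) (Set.mem_Ici.2 (by linarith : (0:ℝ) ≤ 2 * t))
        hlam0 (sub_nonneg.2 hlam1) (by ring)
      have heq : lam • s + (1 - lam) • (2 * t) = t := by
        rw [smul_eq_mul, smul_eq_mul, hlam, div_mul_eq_mul_div, one_sub_div hpos.ne', div_mul_eq_mul_div, ← add_div, div_eq_iff hpos.ne']; ring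
      rw [heq] at hconv
      have h1 : lam • Ψ s ≤ Ψ s := by
        rw [smul_eq_mul]
        nlinarith [nonneg h hs]
      have h2 : (1 - lam) • Ψ (2 * t) ≤ K * (t - s) := by
        rw [smul_eq_mul]
        have hlam2 : 1 - lam = (t - s) / (2 * t - s) := by rw [hlam, one_sub_div hpos.ne']; ring
        rw [hlam2, hK, div_mul_eq_mul_div, div_mul_eq_mul_div, div_le_div_iff₀ hpos h0]
        nlinarith [mul_nonneg (mul_nonneg (sub_nonneg.2 hst)
          (nonneg h (show (0:ℝ) ≤ 2*t by linarith))) (sub_nonneg.2 h2ts)]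
      linarith
    refine le_of_forall_pos_le_add fun ε hε => ?_
    have hKe : 0 < ε / (K + 1) := by positivity
    have htend := hwu.hasSum.tendsto_sum_nat
    have hev : ∀ᶠ n in Filter.atTop, t - ε / (K + 1) < ∑ k ∈ Finset.range n, w k * u k :=
      htend.eventually (eventually_gt_nhds (by linarith))
    obtain ⟨n, hn⟩ := hev.exists
    set s := ∑ k ∈ Finset.range n, w k * u k with hs
    have hs0 : 0 ≤ s := Finset.sum_nonneg fun k _ => mul_nonneg (hw k) (hu k)
    have hst : s ≤ t := Summable.sum_le_tsum _ (fun k _ => mul_nonneg (hw k) (hu k)) hwu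
    calc Ψ t ≤ Ψ s + K * (t - s) := key s hs0 hst
      _ ≤ (∑ k ∈ Finset.range n, w k * Ψ (u k)) + K * (t - s) := by
          have := jensen_finset h w u hw hu (Finset.range n) (hw1 _)
          linarith
      _ ≤ (∑' k, w k * Ψ (u k)) + K * (t - s) := by
          have := Summable.sum_le_tsum (Finset.range n) (fun k _ => mul_nonneg (hw k) (nonneg h (hu k))) hwP
          linarith
      _ ≤ (∑' k, w k * Ψ (u k)) + ε := by
          have h1 : t - s ≤ ε / (K + 1) := by linarith
          have h2 : K * (t - s) ≤ K * (ε / (K + 1)) := mul_le_mul_of_nonneg_left h1 hK0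
          have h3 : K * (ε / (K + 1)) ≤ ε := by
            rw [mul_div_assoc', div_le_iff₀ (by linarith : (0:ℝ) < K + 1)]
            nlinarith
          linarith

end NFAux

namespace NFAux

lemma bounded (h : IsNFunction Ψ) {c : ℕ → ℂ} (hc : MemOrlicz Ψ c) :
    ∃ M : ℝ, 0 ≤ M ∧ ∀ k, ‖c k‖ ≤ M := by
  obtain ⟨l, hl, hsum, hle⟩ := hc
  have hterm : ∀ k, Ψ (‖c k‖ / l) ≤ 1 := fun k =>
    (Summable.le_tsum hsum k fun j _ => nonneg h (by positivity)).trans hle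
  obtain ⟨B, hB⟩ := Filter.eventually_atTop.1 (h.2.2.2.2.eventually_ge_atTop 2)
  set B' := max B 1 with hB'
  have hB'1 : (1:ℝ) ≤ B' := le_max_right _ _
  refine ⟨l * B', by positivity, fun k => ?_⟩
  by_contra hcon
  push_neg at hcon
  have hx : B' < ‖c k‖ / l := by rw [lt_div_iff₀ hl]; linarith [hcon]
  have hxB : B ≤ ‖c k‖ / l := le_of_lt (lt_of_le_of_lt (le_max_left _ _) hx)
  have h2 : 2 ≤ Ψ (‖c k‖ / l) / (‖c k‖ / l) := hB _ hxB
  have hxpos : (0:ℝ) < ‖c k‖ / l := by linarith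
  have : 2 * (‖c k‖ / l) ≤ Ψ (‖c k‖ / l) := by
    rw [le_div_iff₀ hxpos] at h2; linarith
  have : (2:ℝ) ≤ Ψ (‖c k‖ / l) := by nlinarith
  linarith [hterm k]

end NFAux

/-- The Toeplitz operator `T(x)` with matrix `(x_{j-k})_{j,k ≥ 0}`. -/
noncomputable def toep (x : ℤ → ℂ) (c : ℕ → ℂ) : ℕ → ℂ :=
  fun j => ∑' k : ℕ, x ((j : ℤ) - k) * c k

namespace ToepAux

lemma row_summable {x : ℤ → ℂ} (hx : Summable fun m => ‖x m‖) (n : ℤ) :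
    Summable fun k : ℕ => ‖x (n - (k:ℤ))‖ := by
  have hinj : Function.Injective fun k : ℕ => n - (k:ℤ) := by
    intro a b hab
    have := sub_right_injective hab
    exact_mod_cast this
  exact hx.comp_injective hinj

lemma col_summable {x : ℤ → ℂ} (hx : Summable fun m => ‖x m‖) (n : ℤ) :
    Summable fun j : ℕ => ‖x ((j:ℤ) - n)‖ := by
  have hinj : Function.Injective fun j : ℕ => (j:ℤ) - n := by
    intro a b hab
    have := sub_left_injective hab
    exact_mod_cast this
  exact hx.comp_injective hinj

lemma row_tsum_le {x : ℤ → ℂ} (hx : Summable fun m => ‖x m‖) (n : ℤ) :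
    ∑' k : ℕ, ‖x (n - (k:ℤ))‖ ≤ ∑' m : ℤ, ‖x m‖ := by
  refine Summable.tsum_le_tsum_of_inj (fun k : ℕ => n - (k:ℤ)) ?_ (fun _ _ => norm_nonneg _)
    (fun k => le_refl _) (row_summable hx n) hx
  intro a b hab
  have := sub_right_injective hab
  exact_mod_cast this

lemma col_tsum_le {x : ℤ → ℂ} (hx : Summable fun m => ‖x m‖) (n : ℤ) :
    ∑' j : ℕ, ‖x ((j:ℤ) - n)‖ ≤ ∑' m : ℤ, ‖x m‖ := by
  refine Summable.tsum_le_tsum_of_inj (fun j : ℕ => (j:ℤ) - n) ?_ (fun _ _ => norm_nonneg _)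
    (fun k => le_refl _) (col_summable hx n) hx
  intro a b hab
  have := sub_left_injective hab
  exact_mod_cast this

lemma toep_norm_le (x : ℤ → ℂ) (hx : Summable fun m => ‖x m‖) {d : ℕ → ℂ} {M : ℝ}
    (hM : ∀ k, ‖d k‖ ≤ M) (j : ℕ) : ‖toep x d j‖ ≤ (∑' m : ℤ, ‖x m‖) * M := by
  have hM0 : 0 ≤ M := (norm_nonneg _).trans (hM 0)
  have hs : Summable fun k : ℕ => ‖x ((j:ℤ) - k) * d k‖ := by
    refine Summable.of_nonneg_of_le (fun k => norm_nonneg _) (fun k => ?_)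
      ((row_summable hx (j:ℤ)).mul_right M)
    rw [norm_mul]
    exact mul_le_mul_of_nonneg_left (hM k) (norm_nonneg _)
  calc ‖toep x d j‖ ≤ ∑' k : ℕ, ‖x ((j:ℤ) - k) * d k‖ := norm_tsum_le_tsum_norm hs
    _ ≤ ∑' k : ℕ, ‖x ((j:ℤ) - k)‖ * M := by
        refine Summable.tsum_le_tsum (fun k => ?_) hs ((row_summable hx (j:ℤ)).mul_right M)
        rw [norm_mul]
        exact mul_le_mul_of_nonneg_left (hM k) (norm_nonneg _)
    _ = (∑' k : ℕ, ‖x ((j:ℤ) - k)‖) * M := Summable.tsum_mul_right _ (row_summable hx (j:ℤ))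
    _ ≤ (∑' m : ℤ, ‖x m‖) * M := mul_le_mul_of_nonneg_right (row_tsum_le hx (j:ℤ)) hM0

lemma toep_delta (d : ℕ → ℂ) :
    (fun j : ℕ => ∑' m : ℕ, (if ((j:ℤ) - (m:ℤ)) = 0 then (1:ℂ) else 0) * d m) = d := by
  funext j
  have h : ∀ m : ℕ, (if ((j:ℤ) - (m:ℤ)) = 0 then (1:ℂ) else 0) * d m
      = if m = j then d j else 0 := by
    intro m
    by_cases hmj : m = j
    · subst hmj; simp
    · have hne : ¬ ((j:ℤ) - (m:ℤ) = 0) := by omega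
      simp [hne, hmj]
  rw [tsum_congr h]; exact tsum_ite_eq j (fun _ => d j)

lemma conv_flip (f g : ℤ → ℂ) (n : ℤ) :
    (∑' l : ℤ, f l * g (n - l)) = ∑' l : ℤ, g l * f (n - l) := by
  rw [← (Equiv.subLeft n).tsum_eq (fun l : ℤ => g l * f (n - l))]
  refine tsum_congr fun k => ?_
  simp only [Equiv.subLeft_apply, sub_sub_cancel]
  ring

lemma H_left {b c : ℤ → ℂ} (hbA : ∀ n : ℕ, 1 ≤ n → b (n:ℤ) = 0) :
    ∀ (j m : ℕ) (k : ℤ), k < 0 → b ((j:ℤ) - k) * c (k - (m:ℤ)) = 0 := by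
  intro j m k hk
  have h := hbA ((j:ℤ) - k).toNat (by omega)
  rw [Int.toNat_of_nonneg (by omega)] at h
  rw [h, zero_mul]

lemma H_right {b c : ℤ → ℂ} (hcA : ∀ n : ℕ, 1 ≤ n → c (-(n:ℤ)) = 0) :
    ∀ (j m : ℕ) (k : ℤ), k < 0 → b ((j:ℤ) - k) * c (k - (m:ℤ)) = 0 := by
  intro j m k hk
  have h := hcA ((m:ℤ) - k).toNat (by omega)
  rw [Int.toNat_of_nonneg (by omega)] at h
  rw [show k - (m:ℤ) = -((m:ℤ) - k) by ring, h, mul_zero]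

lemma toep_toep (b c : ℤ → ℂ) (hb : Summable fun m => ‖b m‖) (hc : Summable fun m => ‖c m‖)
    {d : ℕ → ℂ} {M : ℝ} (hM : ∀ k, ‖d k‖ ≤ M)
    (H : ∀ (j m : ℕ) (k : ℤ), k < 0 → b ((j:ℤ) - k) * c (k - (m:ℤ)) = 0) :
    toep b (toep c d) = fun j : ℕ =>
      ∑' m : ℕ, (∑' l : ℤ, b l * c (((j:ℤ) - (m:ℤ)) - l)) * d m := by
  have hM0 : 0 ≤ M := (norm_nonneg _).trans (hM 0)
  have hCc0 : 0 ≤ ∑' m : ℤ, ‖c m‖ := tsum_nonneg fun _ => norm_nonneg _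
  have hcb : ∀ n : ℤ, ‖c n‖ ≤ ∑' m : ℤ, ‖c m‖ := fun n =>
    Summable.le_tsum hc n fun _ _ => norm_nonneg _
  funext j
  set f : ℕ → ℕ → ℂ := fun k m => b ((j:ℤ) - k) * (c ((k:ℤ) - m) * d m) with hfdef
  have hf : ∀ k : ℕ, Summable fun m : ℕ => ‖f k m‖ := by
    intro k
    refine Summable.of_nonneg_of_le (fun m => norm_nonneg _) (fun m => ?_)
      (((row_summable hc (k:ℤ)).mul_right M).mul_left ‖b ((j:ℤ) - k)‖)
    simp only [hfdef, norm_mul]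
    exact mul_le_mul_of_nonneg_left
      (mul_le_mul_of_nonneg_left (hM m) (norm_nonneg _)) (norm_nonneg _)
  have hfsum : ∀ k : ℕ, Summable fun m : ℕ => f k m := fun k => (hf k).of_norm
  have hcolbound : ∀ k : ℕ, ∑' m : ℕ, ‖f k m‖ ≤ ‖b ((j:ℤ) - k)‖ * ((∑' m : ℤ, ‖c m‖) * M) := by
    intro k
    calc ∑' m : ℕ, ‖f k m‖ ≤ ∑' m : ℕ, ‖b ((j:ℤ) - k)‖ * (‖c ((k:ℤ) - m)‖ * M) := by
          refine Summable.tsum_le_tsum (fun m => ?_) (hf k)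
            (((row_summable hc (k:ℤ)).mul_right M).mul_left ‖b ((j:ℤ) - k)‖)
          simp only [hfdef, norm_mul]
          exact mul_le_mul_of_nonneg_left
            (mul_le_mul_of_nonneg_left (hM m) (norm_nonneg _)) (norm_nonneg _)
      _ = ‖b ((j:ℤ) - k)‖ * ((∑' m : ℕ, ‖c ((k:ℤ) - m)‖) * M) := by
          rw [tsum_mul_left, Summable.tsum_mul_right _ (row_summable hc (k:ℤ))]
      _ ≤ ‖b ((j:ℤ) - k)‖ * ((∑' m : ℤ, ‖c m‖) * M) := by
          refine mul_le_mul_of_nonneg_left (mul_le_mul_of_nonneg_right ?_ hM0) (norm_nonneg _)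
          exact row_tsum_le hc (k:ℤ)
  have hunc : Summable (Function.uncurry f) := by
    apply Summable.of_norm
    rw [summable_prod_of_nonneg (fun p => norm_nonneg _)]
    constructor
    · intro k; exact hf k
    · refine Summable.of_nonneg_of_le (fun k => tsum_nonneg fun m => norm_nonneg _)
        (fun k => hcolbound k)
        ((row_summable hb (j:ℤ)).mul_right ((∑' m : ℤ, ‖c m‖) * M))
  have hrow : ∀ m : ℕ, Summable fun k : ℕ => f k m := by
    intro m
    refine Summable.of_norm (Summable.of_nonneg_of_le (fun k => norm_nonneg _) (fun k => ?_)
      ((row_summable hb (j:ℤ)).mul_right ((∑' n : ℤ, ‖c n‖) * M)))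
    simp only [hfdef, norm_mul]
    refine mul_le_mul_of_nonneg_left ?_ (norm_nonneg _)
    exact mul_le_mul (hcb _) (hM m) (norm_nonneg _) hCc0
  have hbc : ∀ m : ℕ, Summable fun k : ℕ => b ((j:ℤ) - k) * c ((k:ℤ) - m) := by
    intro m
    refine Summable.of_norm (Summable.of_nonneg_of_le (fun k => norm_nonneg _) (fun k => ?_)
      ((row_summable hb (j:ℤ)).mul_right (∑' n : ℤ, ‖c n‖)))
    rw [norm_mul]
    exact mul_le_mul_of_nonneg_left (hcb _) (norm_nonneg _)
  calc toep b (toep c d) j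
      = ∑' k : ℕ, ∑' m : ℕ, f k m := by
        simp only [toep]
        exact tsum_congr fun k => (tsum_mul_left).symm
    _ = ∑' m : ℕ, ∑' k : ℕ, f k m := (Summable.tsum_comm' hunc hfsum hrow).symm
    _ = ∑' m : ℕ, (∑' k : ℕ, b ((j:ℤ) - k) * c ((k:ℤ) - m)) * d m := by
        refine tsum_congr fun m => ?_
        rw [← Summable.tsum_mul_right _ (hbc m)]
        exact tsum_congr fun k => (mul_assoc _ _ _).symm
    _ = ∑' m : ℕ, (∑' l : ℤ, b l * c (((j:ℤ) - (m:ℤ)) - l)) * d m := by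
        refine tsum_congr fun m => ?_
        congr 1
        have h1 : ∑' k : ℕ, b ((j:ℤ) - (k:ℤ)) * c ((k:ℤ) - m)
            = ∑' n : ℤ, b ((j:ℤ) - n) * c (n - (m:ℤ)) := by
          refine Function.Injective.tsum_eq Nat.cast_injective
            (f := fun n : ℤ => b ((j:ℤ) - n) * c (n - (m:ℤ))) ?_
          intro n hn
          rcases lt_or_ge n 0 with hneg | hpos
          · exact absurd (H j m n hneg) hn
          · exact ⟨n.toNat, Int.toNat_of_nonneg hpos⟩
        rw [h1, ← (Equiv.subLeft (j:ℤ)).tsum_eq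
          (fun l : ℤ => b l * c (((j:ℤ) - (m:ℤ)) - l))]
        refine tsum_congr fun n => ?_
        simp only [Equiv.subLeft_apply]
        congr 2
        ring


lemma toep_memOrlicz {Ψ : ℝ → ℝ} (hΨ : IsNFunction Ψ) (x : ℤ → ℂ)
    (hx : Summable fun m => ‖x m‖) (c : ℕ → ℂ) (hc : MemOrlicz Ψ c) :
    MemOrlicz Ψ (toep x c) := by
  obtain ⟨M, hM0, hM⟩ := NFAux.bounded hΨ hc
  obtain ⟨l, hl, hsum, hle⟩ := hc
  set S := ∑' m : ℤ, ‖x m‖ with hSdef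
  have hS0 : 0 ≤ S := tsum_nonneg fun _ => norm_nonneg _
  rcases hS0.eq_or_lt with hS | hS
  · -- x ≡ 0
    have hx0 : ∀ m : ℤ, x m = 0 := by
      intro m
      have := Summable.le_tsum hx m fun _ _ => norm_nonneg _
      have h0 : ‖x m‖ ≤ 0 := by rw [hSdef] at hS; linarith
      exact norm_le_zero_iff.1 h0
    have ht0 : toep x c = fun _ => 0 := by
      funext j; simp only [toep]
      rw [tsum_congr (fun k => by rw [hx0, zero_mul]), tsum_zero]
    refine ⟨1, one_pos, ?_, ?_⟩
    · rw [ht0]; simpa [hΨ.2.1] using summable_zero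
    · rw [ht0]; simp [hΨ.2.1]
  · set u : ℕ → ℝ := fun k => ‖c k‖ / l with hudef
    set w : ℕ → ℕ → ℝ := fun j k => ‖x ((j:ℤ) - k)‖ / S with hwdef
    have hu0 : ∀ k, 0 ≤ u k := fun k => div_nonneg (norm_nonneg _) hl.le
    have hw0 : ∀ j k, 0 ≤ w j k := fun j k => div_nonneg (norm_nonneg _) hS0
    have hrowS : ∀ j : ℕ, Summable fun k : ℕ => w j k := fun j =>
      (row_summable hx (j:ℤ)).div_const S
    have hcolS : ∀ k : ℕ, Summable fun j : ℕ => w j k := fun k =>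
      (col_summable hx (k:ℤ)).div_const S
    have hw1 : ∀ j : ℕ, ∀ F : Finset ℕ, ∑ k ∈ F, w j k ≤ 1 := by
      intro j F
      calc ∑ k ∈ F, w j k ≤ ∑' k : ℕ, w j k :=
            Summable.sum_le_tsum F (fun k _ => hw0 j k) (hrowS j)
        _ = (∑' k : ℕ, ‖x ((j:ℤ) - k)‖) / S := tsum_div_const
        _ ≤ S / S := by
            exact div_le_div_of_nonneg_right (row_tsum_le hx (j:ℤ)) hS.le
        _ ≤ 1 := by rw [div_self hS.ne']
    have hcol1 : ∀ k : ℕ, ∑' j : ℕ, w j k ≤ 1 := by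
      intro k
      calc ∑' j : ℕ, w j k = (∑' j : ℕ, ‖x ((j:ℤ) - k)‖) / S := tsum_div_const
        _ ≤ S / S := by
            exact div_le_div_of_nonneg_right (col_tsum_le hx (k:ℤ)) hS.le
        _ ≤ 1 := by rw [div_self hS.ne']
    have hwk_le_one : ∀ j k, w j k ≤ 1 := by
      intro j k
      have := hw1 j {k}
      simpa using this
    have hwu : ∀ j : ℕ, Summable fun k => w j k * u k := by
      intro j
      refine Summable.of_nonneg_of_le (fun k => mul_nonneg (hw0 j k) (hu0 k)) (fun k => ?_)
        ((hrowS j).mul_right (M / l))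
      refine mul_le_mul_of_nonneg_left ?_ (hw0 j k)
      exact div_le_div_of_nonneg_right (hM k) hl.le
    have hwP : ∀ j : ℕ, Summable fun k => w j k * Ψ (u k) := by
      intro j
      refine Summable.of_nonneg_of_le
        (fun k => mul_nonneg (hw0 j k) (NFAux.nonneg hΨ (hu0 k))) (fun k => ?_) hsum
      calc w j k * Ψ (u k) ≤ 1 * Ψ (u k) :=
            mul_le_mul_of_nonneg_right (hwk_le_one j k) (NFAux.nonneg hΨ (hu0 k))
        _ = Ψ (‖c k‖ / l) := by rw [one_mul]
    -- pointwise bound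
    have hpoint : ∀ j : ℕ, Ψ (‖toep x c j‖ / (l * S)) ≤ ∑' k, w j k * Ψ (u k) := by
      intro j
      have hsnorm : Summable fun k : ℕ => ‖x ((j:ℤ) - k) * c k‖ := by
        refine Summable.of_nonneg_of_le (fun k => norm_nonneg _) (fun k => ?_)
          ((row_summable hx (j:ℤ)).mul_right M)
        rw [norm_mul]
        exact mul_le_mul_of_nonneg_left (hM k) (norm_nonneg _)
      have step1 : ‖toep x c j‖ ≤ ∑' k : ℕ, ‖x ((j:ℤ) - k)‖ * ‖c k‖ := by
        refine (norm_tsum_le_tsum_norm hsnorm).trans_eq (tsum_congr fun k => ?_)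
        rw [norm_mul]
      have step2 : (∑' k : ℕ, ‖x ((j:ℤ) - k)‖ * ‖c k‖) / (l * S) = ∑' k, w j k * u k := by
        rw [← tsum_div_const]
        refine tsum_congr fun k => ?_
        simp only [hwdef, hudef]
        rw [div_mul_div_comm, mul_comm S l]
      have hd0 : 0 ≤ ‖toep x c j‖ / (l * S) := by positivity
      have step3 : Ψ (‖toep x c j‖ / (l * S)) ≤ Ψ (∑' k, w j k * u k) := by
        refine NFAux.mono hΨ hd0 ?_
        rw [← step2]
        exact div_le_div_of_nonneg_right step1 (by positivity)
      exact step3.trans (NFAux.jensen_tsum hΨ (w j) u (hw0 j) hu0 (hwu j) (hwP j) (hw1 j))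
    -- the double family
    set G : ℕ × ℕ → ℝ := fun p => w p.2 p.1 * Ψ (u p.1) with hGdef
    have hG0 : ∀ p, 0 ≤ G p := fun p => mul_nonneg (hw0 p.2 p.1) (NFAux.nonneg hΨ (hu0 p.1))
    have hGk : ∀ k : ℕ, Summable fun j : ℕ => G (k, j) := fun k =>
      (hcolS k).mul_right (Ψ (u k))
    have hGmarg_le : ∀ k : ℕ, ∑' j : ℕ, G (k, j) ≤ Ψ (‖c k‖ / l) := by
      intro k
      have : ∑' j : ℕ, G (k, j) = (∑' j : ℕ, w j k) * Ψ (u k) := by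
        simp only [hGdef]
        exact Summable.tsum_mul_right _ (hcolS k)
      rw [this]
      calc (∑' j : ℕ, w j k) * Ψ (u k) ≤ 1 * Ψ (u k) :=
            mul_le_mul_of_nonneg_right (hcol1 k) (NFAux.nonneg hΨ (hu0 k))
        _ = Ψ (‖c k‖ / l) := by rw [one_mul]
    have hGmarg : Summable fun k : ℕ => ∑' j : ℕ, G (k, j) :=
      Summable.of_nonneg_of_le (fun k => tsum_nonneg fun j => hG0 _) hGmarg_le hsum
    have hGsummable : Summable G :=
      (summable_prod_of_nonneg hG0).2 ⟨hGk, hGmarg⟩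
    have hGswap : Summable fun q : ℕ × ℕ => G q.swap :=
      hGsummable.comp_injective Prod.swap_injective
    have hg : Summable fun j : ℕ => ∑' k : ℕ, G (k, j) := by
      have := ((summable_prod_of_nonneg (fun q => hG0 q.swap)).1 hGswap).2
      exact this
    have hgle : ∑' j : ℕ, ∑' k : ℕ, G (k, j) ≤ 1 := by
      have hcomm : ∑' j : ℕ, ∑' k : ℕ, G (k, j) = ∑' k : ℕ, ∑' j : ℕ, G (k, j) :=
        Summable.tsum_comm' hGsummable (fun k => hGk k) (fun j => hwP j)
      rw [hcomm]
      exact (Summable.tsum_le_tsum hGmarg_le hGmarg hsum).trans hle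
    have hfin : Summable fun j : ℕ => Ψ (‖toep x c j‖ / (l * S)) :=
      Summable.of_nonneg_of_le (fun j => NFAux.nonneg hΨ (by positivity)) hpoint hg
    exact ⟨l * S, by positivity, hfin, (Summable.tsum_le_tsum hpoint hfin hg).trans hgle⟩
end ToepAux

open ToepAux in
theorem stmt_19 (Ψ : ℝ → ℝ) (hΨ : IsNFunction Ψ)
    (am amI ap apI : ℤ → ℂ)
    (hm : Summable fun k => ‖am k‖) (hmI : Summable fun k => ‖amI k‖)
    (hp : Summable fun k => ‖ap k‖) (hpI : Summable fun k => ‖apI k‖)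
    -- a₋^{±1} ∈ W ∩ H_-^∞ : positive Fourier coefficients vanish
    (hmA : ∀ n : ℕ, 1 ≤ n → am (n : ℤ) = 0) (hmIA : ∀ n : ℕ, 1 ≤ n → amI (n : ℤ) = 0)
    -- a₊^{±1} ∈ W ∩ H_+^∞ : negative Fourier coefficients vanish
    (hpA : ∀ n : ℕ, 1 ≤ n → ap (-(n : ℤ)) = 0) (hpIA : ∀ n : ℕ, 1 ≤ n → apI (-(n : ℤ)) = 0)
    -- amI and apI are the coefficient sequences of a₋⁻¹ and a₊⁻¹
    (hmInv : ∀ m : ℤ, (∑' l : ℤ, am l * amI (m - l)) = if m = 0 then 1 else 0)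
    (hpInv : ∀ m : ℤ, (∑' l : ℤ, ap l * apI (m - l)) = if m = 0 then 1 else 0)
    -- a = a₋ a₊
    (a : ℤ → ℂ) (haDef : ∀ m : ℤ, a m = ∑' l : ℤ, am l * ap (m - l)) :
    ∀ c : ℕ → ℂ, MemOrlicz Ψ c →
      MemOrlicz Ψ (toep a c) ∧
      toep apI (toep amI (toep a c)) = c ∧
      toep a (toep apI (toep amI c)) = c := by
  intro c hc
  obtain ⟨M, hM0, hM⟩ := NFAux.bounded hΨ hc
  have hX : ∀ k, ‖toep ap c k‖ ≤ (∑' m : ℤ, ‖ap m‖) * M := toep_norm_le ap hp hM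
  have hZ : ∀ k, ‖toep amI c k‖ ≤ (∑' m : ℤ, ‖amI m‖) * M := toep_norm_le amI hmI hM
  have hY : ∀ k, ‖toep apI (toep amI c) k‖
      ≤ (∑' m : ℤ, ‖apI m‖) * ((∑' m : ℤ, ‖amI m‖) * M) := toep_norm_le apI hpI hZ
  have Eq1 : ∀ (d : ℕ → ℂ) (Md : ℝ), (∀ k, ‖d k‖ ≤ Md) →
      toep a d = toep am (toep ap d) := by
    intro d Md hMd
    have e1 := toep_toep am ap hm hp hMd (H_left hmA)
    have e2 : toep a d = fun j : ℕ =>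
        ∑' m : ℕ, (∑' l : ℤ, am l * ap (((j:ℤ) - (m:ℤ)) - l)) * d m := by
      funext j; simp only [toep]
      exact tsum_congr fun m => by rw [haDef]
    exact e2.trans e1.symm
  have deltaOf : ∀ (b c' : ℤ → ℂ), (Summable fun m => ‖b m‖) → (Summable fun m => ‖c' m‖) →
      ∀ {d : ℕ → ℂ} {Md : ℝ}, (∀ k, ‖d k‖ ≤ Md) →
      (∀ (j m : ℕ) (k : ℤ), k < 0 → b ((j:ℤ) - k) * c' (k - (m:ℤ)) = 0) →
      (∀ n : ℤ, (∑' l : ℤ, b l * c' (n - l)) = if n = 0 then 1 else 0) →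
      toep b (toep c' d) = d := by
    intro b c' hb hc' d Md hMd H hdel
    rw [toep_toep b c' hb hc' hMd H]
    have hrw : (fun j : ℕ => ∑' m : ℕ, (∑' l : ℤ, b l * c' (((j:ℤ) - (m:ℤ)) - l)) * d m)
        = fun j : ℕ => ∑' m : ℕ, (if ((j:ℤ) - (m:ℤ)) = 0 then (1:ℂ) else 0) * d m := by
      funext j
      exact tsum_congr fun m => by rw [hdel]
    rw [hrw, toep_delta]
  have hconv_mIm : ∀ n : ℤ, (∑' l : ℤ, amI l * am (n - l)) = if n = 0 then 1 else 0 :=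
    fun n => (conv_flip amI am n).trans (hmInv n)
  have hconv_pIp : ∀ n : ℤ, (∑' l : ℤ, apI l * ap (n - l)) = if n = 0 then 1 else 0 :=
    fun n => (conv_flip apI ap n).trans (hpInv n)
  refine ⟨?_, ?_, ?_⟩
  · rw [Eq1 c M hM]
    exact toep_memOrlicz hΨ am hm _ (toep_memOrlicz hΨ ap hp c hc)
  · rw [Eq1 c M hM,
        deltaOf amI am hmI hm hX (H_left hmIA) hconv_mIm,
        deltaOf apI ap hpI hp hM (H_right hpA) hconv_pIp]
  · rw [Eq1 _ _ hY,
        deltaOf ap apI hp hpI hZ (H_right hpIA) hpInv,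
        deltaOf am amI hm hmI hM (H_left hmA) hmInv]
end
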